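/- arXiv:2111.10741 — 6 statements merged into one kernel-verified Lean document; each statement's English description precedes it below -/
import Mathlib

section
/- For every f ∈ L¹(μ), the Littlewood–Paley partial sums S_n f := F⁻¹(1_{{ξ : ‖ξ‖ ≤ p^n}}·Ff), n ∈ ℕ, converge to f in L¹: ‖S_n f − f‖_{L¹(μ)} → 0 as n → ∞. -/
/- Setting: `ℚ_[p]` the `p`-adic numbers with `‖p‖ = p⁻¹`, `μ` an additive Haar measure
normalized so that `μ(ℤ_p) = 1`, and `χ : ℚ_[p] → Circle` a continuous additive character
trivial on `ℤ_p` but nontrivial on `p⁻¹ℤ_p`. -/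

open MeasureTheory ENNReal

noncomputable instance {p : ℕ} [Fact p.Prime] : MeasurableSpace ℚ_[p] := borel _
instance {p : ℕ} [Fact p.Prime] : BorelSpace ℚ_[p] := ⟨rfl⟩

/-- The Fourier transform `(Ff)(ξ) = ∫ f(x)·conj(χ(ξ·x)) dμ(x)` on `ℚ_[p]`. -/
noncomputable def FT {p : ℕ} [Fact p.Prime] (μ : Measure ℚ_[p]) (χ : AddChar ℚ_[p] Circle)
    (f : ℚ_[p] → ℂ) (ξ : ℚ_[p]) : ℂ :=
  ∫ x, f x * (starRingEnd ℂ) (χ (ξ * x) : ℂ) ∂μ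

/-- The inverse Fourier transform `(F⁻¹g)(x) = ∫ g(ξ)·χ(x·ξ) dμ(ξ)` on `ℚ_[p]`. -/
noncomputable def IFT {p : ℕ} [Fact p.Prime] (μ : Measure ℚ_[p]) (χ : AddChar ℚ_[p] Circle)
    (g : ℚ_[p] → ℂ) (x : ℚ_[p]) : ℂ :=
  ∫ ξ, g ξ * (χ (x * ξ) : ℂ) ∂μ

namespace LPaux
variable {p : ℕ} [hp : Fact p.Prime]


def Bs (p : ℕ) [Fact p.Prime] (n : ℤ) : Set ℚ_[p] := {x | ‖x‖ ≤ (p:ℝ)^n}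

lemma measurableSet_Bs (n : ℤ) : MeasurableSet (Bs p n) :=
  (isClosed_le (by continuity) continuous_const).measurableSet

lemma isCompact_Bs (n : ℤ) : IsCompact (Bs p n) := by
  have : Bs p n = Metric.closedBall 0 ((p:ℝ)^n) := by
    ext x; simp [Bs, Metric.mem_closedBall, dist_eq_norm]
  rw [this]; exact isCompact_closedBall 0 _

lemma norm_zpow_p (n : ℤ) : ‖(p:ℚ_[p])^n‖ = (p:ℝ)^(-n) := by
  rw [norm_zpow, Padic.norm_p, inv_zpow, ← zpow_neg]

lemma norm_c (n : ℤ) (i : ℕ) (h0 : 0 < i) (hip : i < p) :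
    ‖(i : ℚ_[p]) * (p:ℚ_[p])^(-(n+1))‖ = (p:ℝ)^(n+1) := by
  have hi : ‖(i : ℚ_[p])‖ = 1 := by
    have h1 : ‖((i : ℤ) : ℚ_[p])‖ ≤ 1 := Padic.norm_int_le_one _
    have h2 : ¬ ‖((i : ℤ) : ℚ_[p])‖ < 1 := by
      rw [Padic.norm_intCast_lt_one_iff]
      intro hdvd
      have := Int.le_of_dvd (by exact_mod_cast h0) hdvd
      omega
    push_cast at h1 h2 ⊢
    linarith [lt_or_eq_of_le h1]
  rw [norm_mul, hi, one_mul, norm_zpow_p, neg_neg]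

lemma residue (y : ℚ_[p]) (hy : ‖y‖ ≤ 1) : ∃ i : ℕ, i < p ∧ ‖y - i‖ ≤ (p:ℝ)^(-1:ℤ) := by
  set y' : ℤ_[p] := ⟨y, hy⟩ with hy'
  refine ⟨y'.appr 1, by simpa using y'.appr_lt 1, ?_⟩
  have hs := y'.appr_spec 1
  have h1 : ‖y' - (y'.appr 1 : ℤ_[p])‖ ≤ (p:ℝ)^(-(1:ℕ):ℤ) :=
    (PadicInt.norm_le_pow_iff_mem_span_pow _ 1).2 hs
  have hne : ((y' - (y'.appr 1 : ℤ_[p]) : ℤ_[p]) : ℚ_[p]) = y - (y'.appr 1 : ℚ_[p]) := by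
    rw [PadicInt.coe_sub, PadicInt.coe_natCast]
  rw [PadicInt.norm_def, hne] at h1
  simpa using h1

lemma p_real_pos : (0:ℝ) < p := by exact_mod_cast hp.out.pos
lemma p_real_gt1 : (1:ℝ) < p := by exact_mod_cast hp.out.one_lt

lemma Bs_decomp (n : ℤ) :
    Bs p (n+1) = ⋃ i ∈ Finset.range p,
      (fun x => x - (i : ℚ_[p]) * (p:ℚ_[p])^(-(n+1))) ⁻¹' Bs p n := by
  ext x
  simp only [Set.mem_iUnion, Set.mem_preimage, Finset.mem_range, Bs, Set.mem_setOf_eq]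
  constructor
  · intro hx
    have hy : ‖x * (p:ℚ_[p])^(n+1)‖ ≤ 1 := by
      rw [norm_mul, norm_zpow_p]
      calc ‖x‖ * (p:ℝ)^(-(n+1)) ≤ (p:ℝ)^(n+1) * (p:ℝ)^(-(n+1)) := by
            apply mul_le_mul_of_nonneg_right hx (zpow_nonneg (le_of_lt p_real_pos) _)
        _ = 1 := by
            rw [← zpow_add₀ (ne_of_gt p_real_pos), show n + 1 + -(n + 1) = 0 by ring,
              zpow_zero]
    obtain ⟨i, hip, hi⟩ := residue (x * (p:ℚ_[p])^(n+1)) hy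
    refine ⟨i, hip, ?_⟩
    have key : x - (i:ℚ_[p]) * (p:ℚ_[p])^(-(n+1))
        = (x * (p:ℚ_[p])^(n+1) - i) * (p:ℚ_[p])^(-(n+1)) := by
      have hpne : ((p:ℚ_[p])) ≠ 0 := by exact_mod_cast hp.out.ne_zero
      have hcancel : (p:ℚ_[p])^(n+1) * (p:ℚ_[p])^(-(n+1)) = 1 := by
        rw [← zpow_add₀ hpne, show n + 1 + -(n + 1) = 0 by ring, zpow_zero]
      rw [sub_mul, mul_assoc, hcancel, mul_one]
    rw [key, norm_mul, norm_zpow_p, neg_neg]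
    calc ‖x * (p:ℚ_[p])^(n+1) - i‖ * (p:ℝ)^(n+1)
        ≤ (p:ℝ)^(-1:ℤ) * (p:ℝ)^(n+1) :=
          mul_le_mul_of_nonneg_right hi (zpow_nonneg (le_of_lt p_real_pos) _)
      _ = (p:ℝ)^n := by rw [← zpow_add₀ (ne_of_gt p_real_pos)]; ring_nf
  · rintro ⟨i, hip, hi⟩
    rcases Nat.eq_zero_or_pos i with h0 | h0
    · subst h0
      simp only [Nat.cast_zero, zero_mul, sub_zero] at hi
      exact le_trans hi (zpow_le_zpow_right₀ (le_of_lt p_real_gt1) (by omega))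
    · have := Padic.nonarchimedean (x - (i:ℚ_[p]) * (p:ℚ_[p])^(-(n+1)))
        ((i:ℚ_[p]) * (p:ℚ_[p])^(-(n+1)))
      simp only [sub_add_cancel] at this
      refine le_trans this (max_le ?_ ?_)
      · exact le_trans hi (zpow_le_zpow_right₀ (le_of_lt p_real_gt1) (by omega))
      · rw [norm_c n i h0 hip]

lemma Bs_disj (n : ℤ) : ∀ i ∈ Finset.range p, ∀ j ∈ Finset.range p, i ≠ j →
    Disjoint ((fun x : ℚ_[p] => x - (i : ℚ_[p]) * (p:ℚ_[p])^(-(n+1))) ⁻¹' Bs p n)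
      ((fun x => x - (j : ℚ_[p]) * (p:ℚ_[p])^(-(n+1))) ⁻¹' Bs p n) := by
  intro i hi j hj hij
  rw [Set.disjoint_left]
  rintro x hxi hxj
  simp only [Set.mem_preimage, Bs, Set.mem_setOf_eq] at hxi hxj
  have hsub : ‖(i : ℚ_[p]) * (p:ℚ_[p])^(-(n+1)) - (j : ℚ_[p]) * (p:ℚ_[p])^(-(n+1))‖ ≤ (p:ℝ)^n := by
    have h := Padic.nonarchimedean (-(x - (i : ℚ_[p]) * (p:ℚ_[p])^(-(n+1))))
      (x - (j : ℚ_[p]) * (p:ℚ_[p])^(-(n+1)))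
    have he : -(x - (i : ℚ_[p]) * (p:ℚ_[p])^(-(n+1))) + (x - (j : ℚ_[p]) * (p:ℚ_[p])^(-(n+1)))
        = (i : ℚ_[p]) * (p:ℚ_[p])^(-(n+1)) - (j : ℚ_[p]) * (p:ℚ_[p])^(-(n+1)) := by ring
    rw [he, norm_neg] at h
    exact le_trans h (max_le hxi hxj)
  have hval : ‖(i : ℚ_[p]) * (p:ℚ_[p])^(-(n+1)) - (j : ℚ_[p]) * (p:ℚ_[p])^(-(n+1))‖
      = (p:ℝ)^(n+1) := by
    have he : (i : ℚ_[p]) * (p:ℚ_[p])^(-(n+1)) - (j : ℚ_[p]) * (p:ℚ_[p])^(-(n+1))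
        = (((i:ℤ) - (j:ℤ) : ℤ) : ℚ_[p]) * (p:ℚ_[p])^(-(n+1)) := by push_cast; ring
    rw [he, norm_mul, norm_zpow_p, neg_neg]
    have hnorm1 : ‖(((i:ℤ) - (j:ℤ) : ℤ) : ℚ_[p])‖ = 1 := by
      have h1 : ‖(((i:ℤ) - (j:ℤ) : ℤ) : ℚ_[p])‖ ≤ 1 := Padic.norm_int_le_one _
      have h2 : ¬ ‖(((i:ℤ) - (j:ℤ) : ℤ) : ℚ_[p])‖ < 1 := by
        rw [Padic.norm_intCast_lt_one_iff]
        intro hdvd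
        simp only [Finset.mem_range] at hi hj
        have h3 : ((i:ℤ) - j) ≠ 0 := by omega
        have h4 := Int.le_of_dvd (abs_pos.mpr h3) ((dvd_abs _ _).mpr hdvd)
        have h5 : |(i:ℤ) - j| < p := abs_lt.mpr (by omega)
        linarith
      linarith [lt_or_eq_of_le h1]
    rw [hnorm1, one_mul]
  rw [hval] at hsub
  have := lt_of_lt_of_le (zpow_lt_zpow_right₀ p_real_gt1 (by omega : n < n + 1)) hsub
  exact lt_irrefl _ this

section Meas
variable (μ : Measure ℚ_[p]) [μ.IsAddHaarMeasure]

lemma meas_rec (n : ℤ) : μ (Bs p (n+1)) = (p : ℝ≥0∞) * μ (Bs p n) := by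
  rw [Bs_decomp n]
  rw [measure_biUnion_finset (fun i hi j hj hij => Bs_disj n i hi j hj hij)
    (fun i _ => (measurableSet_Bs (p := p) n).preimage (by measurability))]
  have : ∀ i ∈ Finset.range p,
      μ ((fun x : ℚ_[p] => x - (i : ℚ_[p]) * (p:ℚ_[p])^(-(n+1))) ⁻¹' Bs p n) = μ (Bs p n) := by
    intro i _
    have : (fun x : ℚ_[p] => x - (i : ℚ_[p]) * (p:ℚ_[p])^(-(n+1)))
        = (fun x : ℚ_[p] => x + (-((i : ℚ_[p]) * (p:ℚ_[p])^(-(n+1))))) := by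
      funext x; ring
    rw [this, measure_preimage_add_right]
  rw [Finset.sum_congr rfl this, Finset.sum_const, Finset.card_range, nsmul_eq_mul]

lemma meas_Bs (hμ : μ {x : ℚ_[p] | ‖x‖ ≤ 1} = 1) (n : ℤ) : μ (Bs p n) = (p : ℝ≥0∞) ^ n := by
  have hp0 : (p : ℝ≥0∞) ≠ 0 := by exact_mod_cast hp.out.ne_zero
  have hpt : (p : ℝ≥0∞) ≠ ∞ := natCast_ne_top p
  have h0 : μ (Bs p 0) = 1 := by
    have : Bs p 0 = {x : ℚ_[p] | ‖x‖ ≤ 1} := by ext x; simp [Bs]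
    rw [this, hμ]
  induction n using Int.induction_on with
  | zero => simpa using h0
  | succ k ih =>
    rw [meas_rec, ih, ENNReal.zpow_add hp0 hpt, zpow_one, mul_comm]
  | pred k ih =>
    have hrec := meas_rec μ (-k - 1)
    rw [show (-k - 1 + 1 : ℤ) = -k by ring, ih] at hrec
    have : (p : ℝ≥0∞) ^ (-k : ℤ) = (p : ℝ≥0∞) * (p : ℝ≥0∞) ^ (-k - 1 : ℤ) := by
      have h := ENNReal.zpow_add hp0 hpt 1 (-k-1)
      rw [zpow_one] at h
      rw [← h, show (1 + (-k - 1) : ℤ) = -k by ring]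
    rw [this] at hrec
    show μ (Bs p (-↑k - 1)) = (p:ℝ≥0∞) ^ (-(k:ℤ) - 1)
    exact ((ENNReal.mul_right_inj hp0 hpt).mp hrec).symm
end Meas

lemma toReal_zpow' (x : ℝ≥0∞) (n : ℤ) : (x ^ n).toReal = x.toReal ^ n := by
  rcases n with k | k
  · simp [ENNReal.toReal_pow]
  · simp [zpow_negSucc, ENNReal.toReal_inv, ENNReal.toReal_pow]

lemma add_mem_Bs {n : ℤ} {u x : ℚ_[p]} (hu : u ∈ Bs p n) (hx : x ∈ Bs p n) :
    u + x ∈ Bs p n :=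
  le_trans (Padic.nonarchimedean u x) (max_le hu hx)

lemma add_mem_Bs_iff {n : ℤ} {u : ℚ_[p]} (hu : u ∈ Bs p n) (x : ℚ_[p]) :
    u + x ∈ Bs p n ↔ x ∈ Bs p n := by
  constructor
  · intro h
    have hnu : -u ∈ Bs p n := by simpa [Bs] using hu
    simpa using add_mem_Bs hnu h
  · exact add_mem_Bs hu

lemma norm_circle (z : Circle) : ‖(z:ℂ)‖ = 1 := by
  rw [Circle.norm_coe]

lemma conj_char (χ : AddChar ℚ_[p] Circle) (t : ℚ_[p]) :
    (starRingEnd ℂ) (χ t : ℂ) = (χ (-t) : ℂ) := by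
  have h1 : (χ t : ℂ) * (χ (-t) : ℂ) = 1 := by
    rw [← Circle.coe_mul, ← AddChar.map_add_eq_mul]; simp
  have h2 : (χ t : ℂ) * (starRingEnd ℂ) (χ t : ℂ) = 1 := by
    rw [Complex.mul_conj]; norm_cast; simp
  have h0 : (χ t : ℂ) ≠ 0 := Circle.coe_ne_zero _
  rw [← h1] at h2
  exact mul_left_cancel₀ h0 h2

section Kernel
variable (μ : Measure ℚ_[p]) [μ.IsAddHaarMeasure]
variable (χ : AddChar ℚ_[p] Circle) (hχc : Continuous χ)

include hχc in
lemma char_integrableOn (n : ℤ) (z : ℚ_[p]) :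
    IntegrableOn (fun ξ => (χ (z * ξ) : ℂ)) (Bs p n) μ := by
  apply ContinuousOn.integrableOn_compact (isCompact_Bs n)
  exact (continuous_subtype_val.comp (hχc.comp (continuous_const.mul continuous_id))).continuousOn

lemma kernel (hμ : μ {x : ℚ_[p] | ‖x‖ ≤ 1} = 1)
    (hχ1 : ∀ x : ℚ_[p], ‖x‖ ≤ 1 → χ x = 1)
    (hχ2 : ∃ x : ℚ_[p], ‖x‖ ≤ p ∧ χ x ≠ 1) (n : ℤ) (z : ℚ_[p]) :
    ∫ ξ in Bs p n, (χ (z * ξ) : ℂ) ∂μ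
      = if ‖z‖ ≤ (p:ℝ)^(-n) then (((p:ℝ)^n : ℝ) : ℂ) else 0 := by
  split_ifs with hz
  · have hcongr : ∀ ξ ∈ Bs p n, (χ (z * ξ) : ℂ) = (1 : ℂ) := by
      intro ξ hξ
      have : ‖z * ξ‖ ≤ 1 := by
        rw [norm_mul]
        calc ‖z‖ * ‖ξ‖ ≤ (p:ℝ)^(-n) * (p:ℝ)^n :=
              mul_le_mul hz hξ (norm_nonneg _) (zpow_nonneg (le_of_lt p_real_pos) _)
          _ = 1 := by
              rw [← zpow_add₀ (ne_of_gt p_real_pos), show (-n + n : ℤ) = 0 by ring, zpow_zero]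
      rw [hχ1 _ this]; simp
    rw [setIntegral_congr_fun (measurableSet_Bs n) hcongr, setIntegral_const,
      measureReal_def, meas_Bs μ hμ n, toReal_zpow']
    simp
  · -- vanishing case
    push_neg at hz
    have hz0 : z ≠ 0 := by
      intro h; rw [h, norm_zero] at hz
      exact absurd (zpow_pos p_real_pos _) (not_lt.mpr hz.le)
    obtain ⟨x₀, hx₀p, hx₀⟩ := hχ2
    set ξ₀ : ℚ_[p] := x₀ * z⁻¹ with hξ₀def
    have hx₀1 : 1 < ‖x₀‖ := by
      by_contra h
      exact hx₀ (hχ1 x₀ (not_lt.mp h))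
    -- ‖z‖ = p ^ v with v ≥ -n + 1
    obtain ⟨v, hv⟩ : ∃ v : ℤ, ‖z‖ = (p:ℝ)^v := ⟨-z.valuation, Padic.norm_eq_zpow_neg_valuation hz0⟩
    have hvn : -n + 1 ≤ v := by
      by_contra h
      push_neg at h
      have : (p:ℝ)^v ≤ (p:ℝ)^(-n) := zpow_le_zpow_right₀ (le_of_lt p_real_gt1) (by omega)
      rw [← hv] at this
      exact absurd this (not_le.mpr hz)
    have hξ₀mem : ξ₀ ∈ Bs p n := by
      show ‖x₀ * z⁻¹‖ ≤ (p:ℝ)^n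
      rw [norm_mul, norm_inv, hv, ← zpow_neg]
      calc ‖x₀‖ * (p:ℝ)^(-v) ≤ (p:ℝ)^(1:ℤ) * (p:ℝ)^(-v) := by
            apply mul_le_mul_of_nonneg_right _ (zpow_nonneg (le_of_lt p_real_pos) _)
            simpa using hx₀p
        _ = (p:ℝ)^(1 - v) := by rw [← zpow_add₀ (ne_of_gt p_real_pos)]; ring_nf
        _ ≤ (p:ℝ)^n := zpow_le_zpow_right₀ (le_of_lt p_real_gt1) (by omega)
    have hzξ₀ : z * ξ₀ = x₀ := by
      rw [hξ₀def]; field_simp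
    set I := ∫ ξ in Bs p n, (χ (z * ξ) : ℂ) ∂μ with hI
    have key : I = (χ x₀ : ℂ) * I := by
      conv_lhs => rw [hI, ← integral_indicator (measurableSet_Bs n)]
      rw [← integral_add_left_eq_self (μ := μ)
        (fun ξ => (Bs p n).indicator (fun ξ' => (χ (z * ξ') : ℂ)) ξ) ξ₀]
      have hind : ∀ ξ : ℚ_[p], (Bs p n).indicator (fun ξ' => (χ (z * ξ') : ℂ)) (ξ₀ + ξ)
          = (Bs p n).indicator (fun ξ' => (χ x₀ : ℂ) * (χ (z * ξ') : ℂ)) ξ := by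
        intro ξ
        by_cases hmem : ξ ∈ Bs p n
        · rw [Set.indicator_of_mem ((add_mem_Bs_iff hξ₀mem ξ).mpr hmem),
            Set.indicator_of_mem hmem]
          rw [show z * (ξ₀ + ξ) = z * ξ₀ + z * ξ by ring, AddChar.map_add_eq_mul, hzξ₀]
          simp
        · rw [Set.indicator_of_notMem (fun h => hmem ((add_mem_Bs_iff hξ₀mem ξ).mp h)),
            Set.indicator_of_notMem hmem]
      calc ∫ ξ, (Bs p n).indicator (fun ξ' => (χ (z * ξ') : ℂ)) (ξ₀ + ξ) ∂μ
          = ∫ ξ, (Bs p n).indicator (fun ξ' => (χ x₀ : ℂ) * (χ (z * ξ') : ℂ)) ξ ∂μ := by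
            exact integral_congr_ae (Filter.EventuallyEq.of_eq (funext hind))
        _ = ∫ ξ in Bs p n, (χ x₀ : ℂ) * (χ (z * ξ) : ℂ) ∂μ := by
            rw [integral_indicator (measurableSet_Bs n)]
        _ = (χ x₀ : ℂ) * I := by
            rw [hI, ← integral_const_mul]
    have : ((χ x₀ : ℂ) - 1) * I = 0 := by rw [sub_mul, one_mul, ← key, sub_self]
    rcases mul_eq_zero.mp this with h | h
    · exfalso
      apply hx₀
      have : (χ x₀ : ℂ) = 1 := by linear_combination h
      exact Circle.coe_inj.mp (by simpa using this)
    · exact h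
end Kernel

section Formula
variable (μ : Measure ℚ_[p]) [μ.IsAddHaarMeasure]
variable (χ : AddChar ℚ_[p] Circle)

instance restr_finite (N : ℤ) : IsFiniteMeasure (μ.restrict (Bs p N)) :=
  ⟨by rw [Measure.restrict_apply_univ]; exact (isCompact_Bs N).measure_lt_top⟩

lemma formula (hμ : μ {x : ℚ_[p] | ‖x‖ ≤ 1} = 1) (hχc : Continuous χ)
    (hχ1 : ∀ x : ℚ_[p], ‖x‖ ≤ 1 → χ x = 1)
    (hχ2 : ∃ x : ℚ_[p], ‖x‖ ≤ p ∧ χ x ≠ 1)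
    (f : ℚ_[p] → ℂ) (hf : Integrable f μ) (N : ℕ) (x : ℚ_[p]) :
    IFT μ χ (fun ξ => Set.indicator {η : ℚ_[p] | ‖η‖ ≤ (p : ℝ) ^ (N : ℤ)} 1 ξ * FT μ χ f ξ) x
      = (((p:ℝ)^(N:ℤ) : ℝ) : ℂ) * ∫ y in {y : ℚ_[p] | ‖x - y‖ ≤ (p:ℝ)^(-(N:ℤ))}, f y ∂μ := by
  have hBeq : {η : ℚ_[p] | ‖η‖ ≤ (p : ℝ) ^ (N : ℤ)} = Bs p (N:ℤ) := rfl
  -- Step 1: rewrite as a set integral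
  have step1 : IFT μ χ
      (fun ξ => Set.indicator {η : ℚ_[p] | ‖η‖ ≤ (p : ℝ) ^ (N : ℤ)} 1 ξ * FT μ χ f ξ) x
      = ∫ ξ in Bs p (N:ℤ), FT μ χ f ξ * (χ (x * ξ) : ℂ) ∂μ := by
    rw [IFT, ← integral_indicator (measurableSet_Bs (N:ℤ))]
    congr 1
    funext ξ
    rw [hBeq]
    by_cases hmem : ξ ∈ Bs p (N:ℤ)
    · rw [Set.indicator_of_mem hmem, Set.indicator_of_mem hmem, Pi.one_apply, one_mul]
    · rw [Set.indicator_of_notMem hmem, Set.indicator_of_notMem hmem, zero_mul, zero_mul]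
  rw [step1]
  -- Step 2: Fubini
  have hint : Integrable (Function.uncurry
      (fun ξ y => f y * ((starRingEnd ℂ) (χ (ξ * y) : ℂ) * (χ (x * ξ) : ℂ))))
      ((μ.restrict (Bs p (N:ℤ))).prod μ) := by
    have hb : Integrable (fun z : ℚ_[p] × ℚ_[p] => (1:ℝ) * ‖f z.2‖)
        ((μ.restrict (Bs p (N:ℤ))).prod μ) :=
      Integrable.mul_prod (integrable_const 1) hf.norm
    apply Integrable.mono' hb
    · apply AEStronglyMeasurable.mul
      · exact hf.1.comp_snd
      · apply Continuous.aestronglyMeasurable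
        apply Continuous.mul
        · exact Complex.continuous_conj.comp (continuous_subtype_val.comp
            (hχc.comp (continuous_mul (M := ℚ_[p]) |>.comp
              (Continuous.prodMk continuous_fst continuous_snd))))
        · exact continuous_subtype_val.comp
            (hχc.comp ((continuous_const.mul continuous_id).comp continuous_fst))
    · refine Filter.Eventually.of_forall (fun z => ?_)
      rw [Function.uncurry, norm_mul, norm_mul, one_mul]
      have h1 : ‖(starRingEnd ℂ) (χ (z.1 * z.2) : ℂ)‖ = 1 := by
        rw [RCLike.norm_conj]; exact norm_circle _
      have h2 : ‖(χ (x * z.1) : ℂ)‖ = 1 := norm_circle _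
      rw [h1, h2]
      simp
  have step2 : ∫ ξ in Bs p (N:ℤ), FT μ χ f ξ * (χ (x * ξ) : ℂ) ∂μ
      = ∫ y, f y * ∫ ξ in Bs p (N:ℤ), (χ ((x - y) * ξ) : ℂ) ∂μ ∂μ := by
    have e1 : ∀ ξ, FT μ χ f ξ * (χ (x * ξ) : ℂ)
        = ∫ y, f y * ((starRingEnd ℂ) (χ (ξ * y) : ℂ) * (χ (x * ξ) : ℂ)) ∂μ := by
      intro ξ
      rw [FT, ← integral_mul_const]
      congr 1; funext y; ring
    rw [integral_congr_ae (Filter.EventuallyEq.of_eq (funext e1))]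
    rw [integral_integral_swap hint]
    congr 1
    funext y
    rw [← integral_const_mul]
    congr 1
    funext ξ
    rw [conj_char, ← Circle.coe_mul, ← AddChar.map_add_eq_mul,
      show -(ξ * y) + x * ξ = (x - y) * ξ by ring]
  rw [step2]
  -- Step 3: kernel evaluation
  have step3 : ∀ y : ℚ_[p], (f y * ∫ ξ in Bs p (N:ℤ), (χ ((x - y) * ξ) : ℂ) ∂μ)
      = (((p:ℝ)^(N:ℤ) : ℝ) : ℂ) *
        Set.indicator {y : ℚ_[p] | ‖x - y‖ ≤ (p:ℝ)^(-(N:ℤ))} f y := by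
    intro y
    rw [kernel μ χ hμ hχ1 hχ2 (N:ℤ) (x - y)]
    by_cases hy : ‖x - y‖ ≤ (p:ℝ)^(-(N:ℤ))
    · rw [if_pos hy, Set.indicator_of_mem
        (show y ∈ {y : ℚ_[p] | ‖x - y‖ ≤ (p:ℝ)^(-(N:ℤ))} from hy)]
      ring
    · rw [if_neg hy, Set.indicator_of_notMem
        (show y ∉ {y : ℚ_[p] | ‖x - y‖ ≤ (p:ℝ)^(-(N:ℤ))} from hy)]
      ring
  rw [integral_congr_ae (Filter.EventuallyEq.of_eq (funext step3)), integral_const_mul,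
    integral_indicator]
  exact (isClosed_le (continuous_const.sub continuous_id).norm continuous_const).measurableSet
end Formula

section Translation
variable (μ : Measure ℚ_[p]) [μ.IsAddHaarMeasure]

lemma translation_cont (f : ℚ_[p] → ℂ) (hf : Integrable f μ) {ε : ℝ≥0∞} (hε : 0 < ε) :
    ∃ δ : ℝ, 0 < δ ∧ ∀ u : ℚ_[p], ‖u‖ < δ →
      eLpNorm (fun x => f (x + u) - f x) 1 μ ≤ ε := by
  have hmem : MemLp f 1 μ := memLp_one_iff_integrable.mpr hf
  set F₀ : Lp ℂ 1 μ := hmem.toLp f with hF₀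
  set cm : ℚ_[p] → C(ℚ_[p], ℚ_[p]) := fun u => ⟨fun x => x + u, by continuity⟩ with hcm
  have hmp : ∀ u : ℚ_[p], MeasurePreserving (cm u) μ μ := fun u =>
    measurePreserving_add_right μ u
  set P : ℚ_[p] → Lp ℂ 1 μ := fun u => Lp.compMeasurePreserving (cm u) (hmp u) F₀ with hP
  have hcmcont : Continuous cm := ContinuousMap.continuous_of_continuous_uncurry _
    (continuous_snd.add continuous_fst)
  have hcont : Filter.Tendsto P (nhds 0) (nhds (P 0)) :=
    Filter.Tendsto.compMeasurePreservingLp tendsto_const_nhds (hcmcont.tendsto 0)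
      hmp (hmp 0) one_ne_top
  have hTz : ∀ u : ℚ_[p], eLpNorm (fun x => f (x + u) - f x) 1 μ = edist (P u) (P 0) := by
    intro u
    rw [Lp.edist_def]
    apply eLpNorm_congr_ae
    have h1 : ⇑(P u) =ᵐ[μ] fun x => f (x + u) := by
      refine (Lp.coeFn_compMeasurePreserving F₀ (hmp u)).trans ?_
      have : ⇑F₀ =ᵐ[μ] f := hmem.coeFn_toLp
      exact (hmp u).quasiMeasurePreserving.ae_eq_comp this
    have h0 : ⇑(P 0) =ᵐ[μ] f := by
      refine (Lp.coeFn_compMeasurePreserving F₀ (hmp 0)).trans ?_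
      have : ⇑F₀ =ᵐ[μ] f := hmem.coeFn_toLp
      refine ((hmp 0).quasiMeasurePreserving.ae_eq_comp this).trans ?_
      apply Filter.EventuallyEq.of_eq
      funext x
      show f (x + 0) = f x
      rw [add_zero]
    filter_upwards [h1, h0] with x hx1 hx0
    rw [Pi.sub_apply, hx1, hx0]
  have hev : ∀ᶠ u in nhds (0:ℚ_[p]), edist (P u) (P 0) < ε :=
    (EMetric.tendsto_nhds.mp hcont) ε hε
  rw [Metric.eventually_nhds_iff] at hev
  obtain ⟨δ, hδ, hδ'⟩ := hev
  refine ⟨δ, hδ, fun u hu => ?_⟩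
  rw [hTz u]
  exact le_of_lt (hδ' (by simpa [dist_eq_norm] using hu))
end Translation

lemma ofReal_p_zpow (m : ℤ) : ENNReal.ofReal ((p:ℝ)^m) = (p:ℝ≥0∞)^m := by
  have h0 : (0:ℝ) ≤ (p:ℝ) := le_of_lt p_real_pos
  induction m using Int.induction_on with
  | zero => simp
  | succ k ih =>
    rw [zpow_add_one₀ (ne_of_gt p_real_pos), ENNReal.ofReal_mul (zpow_nonneg h0 _), ih,
      ENNReal.zpow_add (by exact_mod_cast hp.out.ne_zero) (natCast_ne_top p), zpow_one,
      ENNReal.ofReal_natCast]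
  | pred k ih =>
    rw [zpow_sub_one₀ (ne_of_gt p_real_pos), ENNReal.ofReal_mul (zpow_nonneg h0 _), ih,
      ENNReal.ofReal_inv_of_pos p_real_pos, ENNReal.ofReal_natCast,
      ENNReal.zpow_sub (by exact_mod_cast hp.out.ne_zero) (natCast_ne_top p), zpow_one]

lemma ennnorm_c (m : ℤ) : (‖(((p:ℝ)^m : ℝ) : ℂ)‖₊ : ℝ≥0∞) = (p:ℝ≥0∞)^m := by
  have h0 : (0:ℝ) ≤ (p:ℝ) := le_of_lt p_real_pos
  rw [Complex.nnnorm_real, ← enorm_eq_nnnorm, Real.enorm_eq_ofReal (zpow_nonneg h0 m), ofReal_p_zpow]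

lemma pow_cancel {ε : ℝ≥0∞} (n : ℤ) :
    (p:ℝ≥0∞)^n * (ε * (p:ℝ≥0∞)^(-n)) = ε := by
  have hp0 : (p : ℝ≥0∞) ≠ 0 := by exact_mod_cast hp.out.ne_zero
  have hpt : (p : ℝ≥0∞) ≠ ∞ := natCast_ne_top p
  rw [mul_comm ε _, ← mul_assoc, ← ENNReal.zpow_add hp0 hpt,
    show (n + -n : ℤ) = 0 by ring, zpow_zero, one_mul]

theorem littlewoodPaley_partialSum_tendsto' (μ : Measure ℚ_[p])
    [μ.IsAddHaarMeasure] (hμ : μ {x : ℚ_[p] | ‖x‖ ≤ 1} = 1)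
    (χ : AddChar ℚ_[p] Circle) (hχc : Continuous χ)
    (hχ1 : ∀ x : ℚ_[p], ‖x‖ ≤ 1 → χ x = 1)
    (hχ2 : ∃ x : ℚ_[p], ‖x‖ ≤ p ∧ χ x ≠ 1)
    (f : ℚ_[p] → ℂ) (hf : Integrable f μ) :
    Filter.Tendsto
      (fun n : ℕ => eLpNorm
        (fun x => IFT μ χ (fun ξ =>
          Set.indicator {η : ℚ_[p] | ‖η‖ ≤ (p : ℝ) ^ (n : ℤ)} 1 ξ * FT μ χ f ξ) x - f x) 1 μ)
      Filter.atTop (nhds 0) := by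
  have hp0 : (p : ℝ≥0∞) ≠ 0 := by exact_mod_cast hp.out.ne_zero
  have hpt : (p : ℝ≥0∞) ≠ ∞ := natCast_ne_top p
  -- replace f by a strongly measurable representative g
  set g := hf.1.mk f with hgdef
  have hgsm : StronglyMeasurable g := hf.1.stronglyMeasurable_mk
  have hfg : f =ᵐ[μ] g := hf.1.ae_eq_mk
  have hgint : Integrable g μ := hf.congr hfg
  have hFTeq : FT μ χ f = FT μ χ g := by
    funext ξ
    exact integral_congr_ae (hfg.mul Filter.EventuallyEq.rfl)
  have hE : ∀ n : ℕ, eLpNorm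
      (fun x => IFT μ χ (fun ξ =>
        Set.indicator {η : ℚ_[p] | ‖η‖ ≤ (p : ℝ) ^ (n : ℤ)} 1 ξ * FT μ χ f ξ) x - f x) 1 μ
      = eLpNorm (fun x => IFT μ χ (fun ξ =>
        Set.indicator {η : ℚ_[p] | ‖η‖ ≤ (p : ℝ) ^ (n : ℤ)} 1 ξ * FT μ χ g ξ) x - g x) 1 μ := by
    intro n
    apply eLpNorm_congr_ae
    filter_upwards [hfg] with x hx
    rw [hFTeq, hx]
  rw [show (fun n : ℕ => eLpNorm
      (fun x => IFT μ χ (fun ξ =>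
        Set.indicator {η : ℚ_[p] | ‖η‖ ≤ (p : ℝ) ^ (n : ℤ)} 1 ξ * FT μ χ f ξ) x - f x) 1 μ)
      = (fun n : ℕ => eLpNorm (fun x => IFT μ χ (fun ξ =>
        Set.indicator {η : ℚ_[p] | ‖η‖ ≤ (p : ℝ) ^ (n : ℤ)} 1 ξ * FT μ χ g ξ) x - g x) 1 μ)
    from funext hE]
  -- main argument for g
  rw [ENNReal.tendsto_nhds_zero]
  intro ε hε
  obtain ⟨δ, hδpos, hδ⟩ := translation_cont μ g hgint hε
  have hinvlt : (p:ℝ)⁻¹ < 1 := by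
    rw [inv_lt_one_iff₀]; right; exact p_real_gt1
  have htend : Filter.Tendsto (fun n : ℕ => ((p:ℝ)⁻¹) ^ n) Filter.atTop (nhds 0) :=
    tendsto_pow_atTop_nhds_zero_of_lt_one (by positivity) hinvlt
  filter_upwards [htend.eventually (gt_mem_nhds hδpos)] with n hn
  -- hn : (p⁻¹)^n < δ
  have hrEq : (p:ℝ)^(-(n:ℤ)) = ((p:ℝ)⁻¹)^n := by
    rw [zpow_neg, inv_pow, zpow_natCast]
  -- pointwise identity
  set B' : Set ℚ_[p] := Bs p (-(n:ℤ)) with hB'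
  set c : ℂ := (((p:ℝ)^(n:ℤ) : ℝ) : ℂ) with hc
  have hgcomp : ∀ x : ℚ_[p], Integrable (fun u => g (x + u)) μ := by
    intro x
    exact ((measurePreserving_add_left μ x).integrable_comp_emb
      (measurableEmbedding_addLeft x)).mpr hgint
  have hpt2 : ∀ x : ℚ_[p],
      IFT μ χ (fun ξ =>
        Set.indicator {η : ℚ_[p] | ‖η‖ ≤ (p : ℝ) ^ (n : ℤ)} 1 ξ * FT μ χ g ξ) x - g x
      = c * ∫ u in B', (g (x + u) - g x) ∂μ := by
    intro x
    rw [formula μ χ hμ hχc hχ1 hχ2 g hgint n x]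
    have hpre : (fun u => x + u) ⁻¹' {y : ℚ_[p] | ‖x - y‖ ≤ (p:ℝ)^(-(n:ℤ))} = B' := by
      ext u
      simp only [Set.mem_preimage, Set.mem_setOf_eq, hB', Bs]
      rw [show x - (x + u) = -u by ring, norm_neg]
    have hcv : ∫ y in {y : ℚ_[p] | ‖x - y‖ ≤ (p:ℝ)^(-(n:ℤ))}, g y ∂μ
        = ∫ u in B', g (x + u) ∂μ := by
      rw [← (measurePreserving_add_left μ x).setIntegral_preimage_emb
        (measurableEmbedding_addLeft x) g {y : ℚ_[p] | ‖x - y‖ ≤ (p:ℝ)^(-(n:ℤ))}, hpre]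
    rw [hcv]
    have hsub : ∫ u in B', (g (x + u) - g x) ∂μ
        = (∫ u in B', g (x + u) ∂μ) - ∫ u in B', g x ∂μ :=
      integral_sub ((hgcomp x).integrableOn) (integrableOn_const
        ((isCompact_Bs _).measure_lt_top.ne))
    rw [hsub]
    have hconst : ∫ u in B', g x ∂μ = ((p:ℝ)^(-(n:ℤ)) : ℝ) • g x := by
      rw [setIntegral_const, measureReal_def, hB', meas_Bs μ hμ, toReal_zpow']
      norm_num
    rw [hconst]
    have hcancel : c * ((p:ℝ)^(-(n:ℤ)) : ℝ) = 1 := by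
      have hr : ((p:ℝ)^(n:ℤ) * (p:ℝ)^(-(n:ℤ)) : ℝ) = 1 := by
        rw [← zpow_add₀ (ne_of_gt p_real_pos), show ((n:ℤ) + -(n:ℤ) : ℤ) = 0 by ring, zpow_zero]
      rw [hc, ← Complex.ofReal_mul, hr, Complex.ofReal_one]
    rw [mul_sub]
    congr 1
    rw [Complex.real_smul, ← mul_assoc, hcancel, one_mul]
  rw [eLpNorm_congr_ae (Filter.EventuallyEq.of_eq (funext hpt2)),
    eLpNorm_one_eq_lintegral_enorm]
  -- now bound the lintegral
  have hmeasG : Measurable (fun z : ℚ_[p] × ℚ_[p] => (‖g (z.1 + z.2) - g z.1‖₊ : ℝ≥0∞)) := by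
    refine Measurable.coe_nnreal_ennreal (Measurable.nnnorm ?_)
    exact (hgsm.measurable.comp (measurable_fst.add measurable_snd)).sub
      (hgsm.measurable.comp measurable_fst)
  calc ∫⁻ x, (‖c * ∫ u in B', (g (x + u) - g x) ∂μ‖₊ : ℝ≥0∞) ∂μ
      = ∫⁻ x, (p:ℝ≥0∞)^(n:ℤ) * (‖∫ u in B', (g (x + u) - g x) ∂μ‖₊ : ℝ≥0∞) ∂μ := by
        apply lintegral_congr
        intro x
        rw [nnnorm_mul, ENNReal.coe_mul, hc, ennnorm_c]
    _ ≤ ∫⁻ x, (p:ℝ≥0∞)^(n:ℤ) * ∫⁻ u in B', (‖g (x + u) - g x‖₊ : ℝ≥0∞) ∂μ ∂μ := by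
        apply lintegral_mono
        intro x
        exact mul_le_mul_right (enorm_integral_le_lintegral_enorm _) _
    _ = (p:ℝ≥0∞)^(n:ℤ) * ∫⁻ x, ∫⁻ u in B', (‖g (x + u) - g x‖₊ : ℝ≥0∞) ∂μ ∂μ :=
        lintegral_const_mul' _ _ (ENNReal.zpow_lt_top hp0 hpt _).ne
    _ = (p:ℝ≥0∞)^(n:ℤ) * ∫⁻ u in B', ∫⁻ x, (‖g (x + u) - g x‖₊ : ℝ≥0∞) ∂μ ∂μ := by
        congr 1
        exact lintegral_lintegral_swap hmeasG.aemeasurable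
    _ ≤ (p:ℝ≥0∞)^(n:ℤ) * (ε * (p:ℝ≥0∞)^(-(n:ℤ))) := by
        apply mul_le_mul_right
        have hbound : ∀ᵐ u ∂(μ.restrict B'),
            (∫⁻ x, (‖g (x + u) - g x‖₊ : ℝ≥0∞) ∂μ) ≤ ε := by
          rw [ae_restrict_iff' (measurableSet_Bs _)]
          apply Filter.Eventually.of_forall
          intro u hu
          have hun : ‖u‖ < δ := by
            calc ‖u‖ ≤ (p:ℝ)^(-(n:ℤ)) := hu
              _ = ((p:ℝ)⁻¹)^n := hrEq
              _ < δ := hn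
          have := hδ u hun
          rwa [eLpNorm_one_eq_lintegral_enorm] at this
        calc ∫⁻ u in B', (∫⁻ x, (‖g (x + u) - g x‖₊ : ℝ≥0∞) ∂μ) ∂μ
            ≤ ∫⁻ _ in B', ε ∂μ := lintegral_mono_ae hbound
          _ = ε * μ B' := setLIntegral_const B' ε
          _ = ε * (p:ℝ≥0∞)^(-(n:ℤ)) := by rw [hB', meas_Bs μ hμ]
    _ = ε := pow_cancel _

end LPaux

/-- **Littlewood–Paley partial sums converge in `L¹`.** For every `f ∈ L¹(μ)`, the partial
sums `S_n f := F⁻¹(1_{{ξ : ‖ξ‖ ≤ p^n}}·Ff)` satisfy `‖S_n f − f‖_{L¹(μ)} → 0` as `n → ∞`. -/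
theorem littlewoodPaley_partialSum_tendsto {p : ℕ} [Fact p.Prime] (μ : Measure ℚ_[p])
    [μ.IsAddHaarMeasure] (hμ : μ {x : ℚ_[p] | ‖x‖ ≤ 1} = 1)
    (χ : AddChar ℚ_[p] Circle) (hχc : Continuous χ)
    (hχ1 : ∀ x : ℚ_[p], ‖x‖ ≤ 1 → χ x = 1)
    (hχ2 : ∃ x : ℚ_[p], ‖x‖ ≤ p ∧ χ x ≠ 1)
    (f : ℚ_[p] → ℂ) (hf : Integrable f μ) :
    Filter.Tendsto
      (fun n : ℕ => eLpNorm
        (fun x => IFT μ χ (fun ξ =>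
          Set.indicator {η : ℚ_[p] | ‖η‖ ≤ (p : ℝ) ^ (n : ℤ)} 1 ξ * FT μ χ f ξ) x - f x) 1 μ)
      Filter.atTop (nhds 0) :=
  LPaux.littlewoodPaley_partialSum_tendsto' μ hμ χ hχc hχ1 hχ2 f hf
end

section
/- For every k ∈ ℤ and every ξ ∈ ℚ_p, the Fourier transform of the indicator function of the sphere {x : ‖x‖ = p^k} satisfies F(1_{{x : ‖x‖ = p^k}})(ξ) = p^k·1_{{η : ‖η‖ ≤ p^{−k}}}(ξ) − p^{k−1}·1_{{η : ‖η‖ ≤ p^{−k+1}}}(ξ). -/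
/- Setting: `ℚ_[p]` the `p`-adic numbers with `‖p‖ = p⁻¹`, `μ` an additive Haar measure
normalized so that `μ(ℤ_p) = 1`, and `χ : ℚ_[p] → Circle` a continuous additive character
trivial on `ℤ_p` but nontrivial on `p⁻¹ℤ_p`. -/

open MeasureTheory ENNReal
open Pointwise

namespace FSAux

variable {p : ℕ} [Fact p.Prime]



/-- The closed ball of radius `p^k`. -/
def B (p : ℕ) [Fact p.Prime] (k : ℤ) : Set ℚ_[p] := {x : ℚ_[p] | ‖x‖ ≤ (p : ℝ) ^ k}

lemma B_eq_closedBall (k : ℤ) : B p k = Metric.closedBall (0 : ℚ_[p]) ((p : ℝ) ^ k) := by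
  ext x; simp [B, Metric.mem_closedBall, dist_zero_right]

lemma measurableSet_B (k : ℤ) : MeasurableSet (B p k) := by
  rw [B_eq_closedBall]; exact measurableSet_closedBall

lemma isCompact_B (k : ℤ) : IsCompact (B p k) := by
  rw [B_eq_closedBall]; exact isCompact_closedBall _ _

lemma hp1 : (1 : ℝ) < (p : ℝ) := by exact_mod_cast (Fact.out : p.Prime).one_lt

lemma add_mem_B {k : ℤ} {x y : ℚ_[p]} (hx : x ∈ B p k) (hy : y ∈ B p k) : x + y ∈ B p k :=
  le_trans (Padic.nonarchimedean x y) (max_le hx hy)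

lemma exists_repr (u : ℚ_[p]) (hu : ‖u‖ ≤ 1) :
    ∃ j : ℕ, j < p ∧ ‖u - (j : ℚ_[p])‖ ≤ (p : ℝ)⁻¹ := by
  set z : ℤ_[p] := ⟨u, hu⟩ with hz
  refine ⟨z.zmodRepr, PadicInt.zmodRepr_lt_p z, ?_⟩
  have h1 := PadicInt.sub_zmodRepr_mem z
  rw [IsLocalRing.mem_maximalIdeal, PadicInt.mem_nonunits] at h1
  have h2 : ‖u - (z.zmodRepr : ℚ_[p])‖ < 1 := by
    have : ((z - (z.zmodRepr : ℤ_[p]) : ℤ_[p]) : ℚ_[p]) = u - (z.zmodRepr : ℚ_[p]) := by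
      rfl
    rw [← this, PadicInt.padic_norm_e_of_padicInt]
    exact h1
  have h3 := (Padic.norm_lt_pow_iff_norm_le_pow_sub_one (u - (z.zmodRepr : ℚ_[p])) 0).mp
    (by simpa using h2)
  simpa [zpow_neg_one] using h3

lemma norm_sub_le_max (a b : ℚ_[p]) : ‖a - b‖ ≤ max ‖a‖ ‖b‖ := by
  rw [sub_eq_add_neg]
  exact le_trans (Padic.nonarchimedean _ _) (by simp)

lemma hpQ : ((p : ℚ_[p])) ≠ 0 := by
  exact_mod_cast (Fact.out : p.Prime).ne_zero

set_option maxHeartbeats 1000000 in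
lemma B_succ_eq (k : ℤ) :
    B p (k + 1) = ⋃ j ∈ Finset.range p, ((j : ℚ_[p]) * (p : ℚ_[p]) ^ (-(k+1)) +ᵥ B p k) := by
  have hppos : (0:ℝ) < p := lt_trans one_pos hp1
  ext x
  simp only [Set.mem_iUnion, Finset.mem_range, Set.mem_vadd_set_iff_neg_vadd_mem, vadd_eq_add,
    B, Set.mem_setOf_eq]
  constructor
  · intro hx
    have hu : ‖x * (p : ℚ_[p]) ^ (k+1)‖ ≤ 1 := by
      rw [norm_mul, Padic.norm_p_zpow]
      calc ‖x‖ * (p:ℝ) ^ (-(k+1)) ≤ (p:ℝ) ^ (k+1) * (p:ℝ) ^ (-(k+1)) := by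
            apply mul_le_mul_of_nonneg_right hx (le_of_lt (zpow_pos hppos _))
        _ = 1 := by rw [zpow_neg, mul_inv_cancel₀ (ne_of_gt (zpow_pos hppos _))]
    obtain ⟨j, hjp, hj⟩ := exists_repr _ hu
    refine ⟨j, hjp, ?_⟩
    have key : -((j : ℚ_[p]) * (p : ℚ_[p]) ^ (-(k+1))) + x
        = (x * (p : ℚ_[p]) ^ (k+1) - (j : ℚ_[p])) * (p : ℚ_[p]) ^ (-(k+1)) := by
      rw [sub_mul, mul_assoc, ← zpow_add₀ hpQ, add_neg_cancel, zpow_zero, mul_one]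
      ring
    rw [key, norm_mul, Padic.norm_p_zpow, neg_neg]
    calc ‖x * (p : ℚ_[p]) ^ (k+1) - (j : ℚ_[p])‖ * (p:ℝ) ^ (k+1)
        ≤ (p:ℝ)⁻¹ * (p:ℝ) ^ (k+1) := mul_le_mul_of_nonneg_right hj (le_of_lt (zpow_pos hppos _))
      _ = (p:ℝ) ^ k := by
          rw [← zpow_neg_one, ← zpow_add₀ (ne_of_gt hppos)]; ring_nf
  · rintro ⟨j, hjp, hj⟩
    have hx : x = (j : ℚ_[p]) * (p : ℚ_[p]) ^ (-(k+1)) + (-((j : ℚ_[p]) * (p : ℚ_[p]) ^ (-(k+1))) + x) := by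
      ring
    rw [hx]
    refine le_trans (Padic.nonarchimedean _ _) (max_le ?_ ?_)
    · rw [norm_mul, Padic.norm_p_zpow, neg_neg]
      calc ‖(j : ℚ_[p])‖ * (p:ℝ) ^ (k+1) ≤ 1 * (p:ℝ) ^ (k+1) := by
            apply mul_le_mul_of_nonneg_right _ (le_of_lt (zpow_pos hppos _))
            exact_mod_cast Padic.norm_int_le_one (j : ℤ)
        _ = (p:ℝ) ^ (k+1) := one_mul _
    · calc ‖-((j : ℚ_[p]) * (p : ℚ_[p]) ^ (-(k+1))) + x‖ ≤ (p:ℝ) ^ k := hj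
        _ ≤ (p:ℝ) ^ (k+1) := by
            apply zpow_le_zpow_right₀ (le_of_lt hp1); omega

lemma B_succ_disjoint (k : ℤ) :
    (Finset.range p : Set ℕ).Pairwise (Function.onFun Disjoint
      (fun j => ((j : ℚ_[p]) * (p : ℚ_[p]) ^ (-(k+1)) +ᵥ B p k))) := by
  have hppos : (0:ℝ) < p := lt_trans one_pos hp1
  intro i hi j hj hij
  simp only [Finset.coe_range, Set.mem_Iio] at hi hj
  rw [Function.onFun, Set.disjoint_left]
  rintro x hxi hxj
  rw [Set.mem_vadd_set_iff_neg_vadd_mem, vadd_eq_add] at hxi hxj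
  have hmem : ((i : ℚ_[p]) - (j : ℚ_[p])) * (p : ℚ_[p]) ^ (-(k+1)) ∈ B p k := by
    have h5 : ((i : ℚ_[p]) - (j : ℚ_[p])) * (p : ℚ_[p]) ^ (-(k+1))
        = (-((j : ℚ_[p]) * (p : ℚ_[p]) ^ (-(k+1))) + x) - (-((i : ℚ_[p]) * (p : ℚ_[p]) ^ (-(k+1))) + x) := by
      ring
    rw [B, Set.mem_setOf_eq, h5]
    refine le_trans (norm_sub_le_max _ _) (max_le hxj ?_)
    simpa [B] using hxi
  have hnorm1 : ‖((i : ℚ_[p]) - (j : ℚ_[p]))‖ = 1 := by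
    have hle : ‖(((i - j : ℤ)) : ℚ_[p])‖ ≤ 1 := Padic.norm_int_le_one _
    have hndvd : ¬ ((p:ℤ) ∣ ((i:ℤ) - (j:ℤ))) := by
      intro hdvd
      have h2 : ((i:ℤ) - (j:ℤ)) ≠ 0 := by
        intro h; apply hij; omega
      have h5 : p ∣ ((i:ℤ) - j).natAbs := by
        rw [← Int.natAbs_natCast p]; exact Int.natAbs_dvd_natAbs.mpr hdvd
      have h6 := Nat.le_of_dvd (Int.natAbs_pos.mpr h2) h5
      omega
    have hnlt := (Padic.norm_intCast_lt_one_iff (k := ((i:ℤ) - (j:ℤ)))).not.mpr hndvd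
    have hcast : (((i - j : ℤ)) : ℚ_[p]) = (i : ℚ_[p]) - (j : ℚ_[p]) := by push_cast; ring
    rw [hcast] at hle hnlt
    linarith [not_lt.mp hnlt]
  rw [B, Set.mem_setOf_eq, Padic.padicNormE.mul, hnorm1, one_mul, Padic.norm_p_zpow, neg_neg] at hmem
  have hlt : (p:ℝ) ^ k < (p:ℝ) ^ (k+1) := by
    apply zpow_lt_zpow_right₀ hp1; omega
  linarith
lemma measure_B_succ (μ : Measure ℚ_[p]) [μ.IsAddHaarMeasure] (k : ℤ) :
    μ (B p (k+1)) = p * μ (B p k) := by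
  rw [B_succ_eq k, measure_biUnion_finset (B_succ_disjoint k)
    (fun j _ => (measurableSet_B k).const_vadd _)]
  simp only [measure_vadd]
  rw [Finset.sum_const, Finset.card_range, nsmul_eq_mul]

lemma measure_B (μ : Measure ℚ_[p]) [μ.IsAddHaarMeasure]
    (hμ : μ {x : ℚ_[p] | ‖x‖ ≤ 1} = 1) (k : ℤ) :
    μ (B p k) = ENNReal.ofReal ((p : ℝ) ^ k) := by
  have hppos : (0:ℝ) < p := lt_trans one_pos hp1
  have hB0 : μ (B p 0) = 1 := by
    have : B p 0 = {x : ℚ_[p] | ‖x‖ ≤ 1} := by ext x; simp [B]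
    rw [this, hμ]
  have hpE0 : (p : ℝ≥0∞) ≠ 0 := by exact_mod_cast (Fact.out : p.Prime).ne_zero
  have hpET : (p : ℝ≥0∞) ≠ ⊤ := by simp
  induction k using Int.induction_on with
  | zero => simp [hB0]
  | succ n ih =>
      rw [measure_B_succ μ n, ih, zpow_add_one₀ (ne_of_gt hppos),
        ENNReal.ofReal_mul (by positivity)]
      rw [mul_comm]
      congr 1
      simp
  | pred n ih =>
      have hco : (-(n:ℤ) - 1) = (-((n:ℤ)+1)) := by ring
      rw [hco]
      have hstep := measure_B_succ μ (-(n+1) : ℤ)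
      have : (-(n+1) : ℤ) + 1 = -n := by ring
      rw [this, ih] at hstep
      have hval : ENNReal.ofReal ((p:ℝ) ^ (-(n:ℤ))) =
          (p : ℝ≥0∞) * ENNReal.ofReal ((p:ℝ) ^ (-(n+1:ℤ))) := by
        rw [← ENNReal.ofReal_natCast p, ← ENNReal.ofReal_mul (by positivity)]
        congr 1
        rw [mul_comm, ← zpow_add_one₀ (ne_of_gt hppos)]
        congr 1; push_cast; ring
      rw [hval] at hstep
      exact ((ENNReal.mul_right_inj hpE0 hpET).mp hstep.symm)

lemma continuous_integrand (χ : AddChar ℚ_[p] Circle) (hχc : Continuous χ) (ξ : ℚ_[p]) :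
    Continuous (fun x : ℚ_[p] => (starRingEnd ℂ) (χ (ξ * x) : ℂ)) := by
  apply Complex.continuous_conj.comp
  exact continuous_subtype_val.comp (hχc.comp (continuous_const.mul continuous_id))

lemma integrableOn_B (μ : Measure ℚ_[p]) [μ.IsAddHaarMeasure]
    (χ : AddChar ℚ_[p] Circle) (hχc : Continuous χ) (ξ : ℚ_[p]) (k : ℤ) :
    IntegrableOn (fun x : ℚ_[p] => (starRingEnd ℂ) (χ (ξ * x) : ℂ)) (B p k) μ :=
  (continuous_integrand χ hχc ξ).continuousOn.integrableOn_compact (isCompact_B k)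

lemma integral_char_B (μ : Measure ℚ_[p]) [μ.IsAddHaarMeasure]
    (hμ : μ {x : ℚ_[p] | ‖x‖ ≤ 1} = 1)
    (χ : AddChar ℚ_[p] Circle) (hχc : Continuous χ)
    (hχ1 : ∀ x : ℚ_[p], ‖x‖ ≤ 1 → χ x = 1)
    (hχ2 : ∃ x : ℚ_[p], ‖x‖ ≤ p ∧ χ x ≠ 1) (k : ℤ) (ξ : ℚ_[p]) :
    ∫ x in B p k, (starRingEnd ℂ) (χ (ξ * x) : ℂ) ∂μ =
      if ‖ξ‖ ≤ (p : ℝ) ^ (-k) then ((p : ℝ) ^ k : ℂ) else 0 := by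
  have hppos : (0:ℝ) < p := lt_trans one_pos hp1
  split_ifs with hξ
  · have heq : Set.EqOn (fun x : ℚ_[p] => (starRingEnd ℂ) (χ (ξ * x) : ℂ)) (fun _ => (1:ℂ)) (B p k) := by
      intro x hx
      have : ‖ξ * x‖ ≤ 1 := by
        rw [Padic.padicNormE.mul]
        calc ‖ξ‖ * ‖x‖ ≤ (p:ℝ)^(-k) * (p:ℝ)^k := by
              exact mul_le_mul hξ hx (norm_nonneg x) (le_of_lt (zpow_pos hppos _))
          _ = 1 := by rw [zpow_neg, inv_mul_cancel₀ (ne_of_gt (zpow_pos hppos _))]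
      simp only [hχ1 _ this]
      simp
    rw [setIntegral_congr_fun (measurableSet_B k) heq, setIntegral_const, measureReal_def,
      measure_B μ hμ k, ENNReal.toReal_ofReal (by positivity)]
    simp
  · -- vanishing case
    push_neg at hξ
    obtain ⟨x0, hx0le, hx0ne⟩ := hχ2
    have hξ0 : ξ ≠ 0 := by
      intro h; rw [h, norm_zero] at hξ; exact absurd hξ (not_lt.mpr (le_of_lt (zpow_pos hppos _)))
    set y : ℚ_[p] := x0 * ξ⁻¹ with hy
    have hξy : ξ * y = x0 := by rw [hy, mul_comm, mul_assoc, inv_mul_cancel₀ hξ0, mul_one]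
    have hymem : y ∈ B p k := by
      have h1 : ‖y‖ < (p:ℝ) ^ (k+1) := by
        rw [hy, Padic.padicNormE.mul, norm_inv]
        calc ‖x0‖ * ‖ξ‖⁻¹ ≤ (p:ℝ) * ‖ξ‖⁻¹ := by
              apply mul_le_mul_of_nonneg_right hx0le (by positivity)
          _ < (p:ℝ) * (p:ℝ)^k := by
              apply mul_lt_mul_of_pos_left _ hppos
              have h2 : ‖ξ‖⁻¹ < ((p:ℝ)^(-k))⁻¹ := inv_strictAnti₀ (zpow_pos hppos _) hξ
              rwa [← zpow_neg, neg_neg] at h2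
          _ = (p:ℝ)^(k+1) := by rw [zpow_add_one₀ (ne_of_gt hppos)]; ring
      have := (Padic.norm_lt_pow_iff_norm_le_pow_sub_one y (k+1)).mp h1
      simpa [B] using this
    set c : ℂ := (starRingEnd ℂ) (χ (ξ * y) : ℂ) with hc
    set f : ℚ_[p] → ℂ := fun x => (starRingEnd ℂ) (χ (ξ * x) : ℂ) with hf
    have hmeas : MeasurableSet (B p k) := measurableSet_B k
    have hptw : ∀ x : ℚ_[p], (B p k).indicator f (x + y) = c * (B p k).indicator f x := by
      intro x
      by_cases hx : x ∈ B p k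
      · have hxy : x + y ∈ B p k := add_mem_B hx hymem
        rw [Set.indicator_of_mem hxy, Set.indicator_of_mem hx, hf, hc]
        simp only
        rw [← map_mul]
        congr 1
        have : χ (ξ * (x + y)) = χ (ξ * y) * χ (ξ * x) := by
          rw [mul_add, AddChar.map_add_eq_mul, mul_comm]
        rw [this]
        push_cast
        ring
      · have hxy : x + y ∉ B p k := by
          intro hmem
          apply hx
          have : x = (x + y) + (-y) := by ring
          rw [this]
          apply add_mem_B hmem
          simpa [B] using hymem
        rw [Set.indicator_of_notMem hxy, Set.indicator_of_notMem hx, mul_zero]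
    have key : ∫ x in B p k, f x ∂μ = c * ∫ x in B p k, f x ∂μ := by
      calc ∫ x in B p k, f x ∂μ = ∫ x, (B p k).indicator f x ∂μ := (integral_indicator hmeas).symm
        _ = ∫ x, (B p k).indicator f (x + y) ∂μ := (integral_add_right_eq_self _ y).symm
        _ = ∫ x, c * (B p k).indicator f x ∂μ := by simp_rw [hptw]
        _ = c * ∫ x, (B p k).indicator f x ∂μ := integral_const_mul _ _
        _ = c * ∫ x in B p k, f x ∂μ := by rw [integral_indicator hmeas]
    have hc1 : c ≠ 1 := by
      intro h
      apply hx0ne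
      rw [← hξy]
      have : (χ (ξ * y) : ℂ) = 1 := by
        have h2 := congrArg (starRingEnd ℂ) h
        rw [hc] at h2
        simpa using h2
      exact_mod_cast Subtype.ext this
    have : (1 - c) * ∫ x in B p k, f x ∂μ = 0 := by
      rw [sub_mul, one_mul, ← key, sub_self]
    rcases mul_eq_zero.mp this with h | h
    · exact absurd (by linear_combination -h : c = 1) hc1
    · exact h

lemma sphere_eq_diff (k : ℤ) :
    {x : ℚ_[p] | ‖x‖ = (p : ℝ) ^ k} = B p k \ B p (k - 1) := by
  ext x
  rw [Set.mem_diff]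
  simp only [B, Set.mem_setOf_eq]
  rw [Padic.norm_le_pow_iff_norm_lt_pow_add_one x (k-1), sub_add_cancel, not_lt]
  exact le_antisymm_iff


end FSAux

/-- **Fourier transform of a sphere indicator.** For every `k ∈ ℤ` and `ξ ∈ ℚ_p`,
`F(1_{{x : ‖x‖ = p^k}})(ξ) = p^k·1_{{η : ‖η‖ ≤ p^{−k}}}(ξ) − p^{k−1}·1_{{η : ‖η‖ ≤ p^{−k+1}}}(ξ)`. -/
theorem fourier_sphere_indicator {p : ℕ} [Fact p.Prime] (μ : Measure ℚ_[p])
    [μ.IsAddHaarMeasure] (hμ : μ {x : ℚ_[p] | ‖x‖ ≤ 1} = 1)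
    (χ : AddChar ℚ_[p] Circle) (hχc : Continuous χ)
    (hχ1 : ∀ x : ℚ_[p], ‖x‖ ≤ 1 → χ x = 1)
    (hχ2 : ∃ x : ℚ_[p], ‖x‖ ≤ p ∧ χ x ≠ 1)
    (k : ℤ) (ξ : ℚ_[p]) :
    FT μ χ (Set.indicator {x : ℚ_[p] | ‖x‖ = (p : ℝ) ^ k} 1) ξ =
      (p : ℂ) ^ k * Set.indicator {η : ℚ_[p] | ‖η‖ ≤ (p : ℝ) ^ (-k)} 1 ξ -
        (p : ℂ) ^ (k - 1) * Set.indicator {η : ℚ_[p] | ‖η‖ ≤ (p : ℝ) ^ (-k + 1)} 1 ξ := by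
  have hppos : (0:ℝ) < p := lt_trans one_pos (FSAux.hp1 (p := p))
  set f : ℚ_[p] → ℂ := fun x => (starRingEnd ℂ) (χ (ξ * x) : ℂ) with hf
  set S : Set ℚ_[p] := {x : ℚ_[p] | ‖x‖ = (p : ℝ) ^ k} with hS
  have hSd : S = FSAux.B p k \ FSAux.B p (k - 1) := FSAux.sphere_eq_diff k
  have step1 : FT μ χ (Set.indicator S 1) ξ = ∫ x in S, f x ∂μ := by
    rw [FT, ← integral_indicator (by rw [hSd]; exact (FSAux.measurableSet_B k).diff (FSAux.measurableSet_B (k-1)))]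
    congr 1
    ext x
    by_cases hx : x ∈ S
    · rw [Set.indicator_of_mem hx, Set.indicator_of_mem hx, Pi.one_apply, one_mul]
    · rw [Set.indicator_of_notMem hx, Set.indicator_of_notMem hx, zero_mul]
  have hsub : FSAux.B p (k-1) ⊆ FSAux.B p k := by
    intro x hx
    exact le_trans hx (zpow_le_zpow_right₀ (le_of_lt FSAux.hp1) (by omega))
  have step2 : ∫ x in S, f x ∂μ = (∫ x in FSAux.B p k, f x ∂μ) - ∫ x in FSAux.B p (k-1), f x ∂μ := by
    rw [hSd]
    exact integral_diff (FSAux.measurableSet_B (k-1)) (FSAux.integrableOn_B μ χ hχc ξ k) hsub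
  rw [step1, step2, FSAux.integral_char_B μ hμ χ hχc hχ1 hχ2 k ξ,
    FSAux.integral_char_B μ hμ χ hχc hχ1 hχ2 (k-1) ξ]
  have hmon : (p:ℝ) ^ (-k) ≤ (p:ℝ) ^ (-(k-1)) :=
    zpow_le_zpow_right₀ (le_of_lt FSAux.hp1) (by omega)
  have hexp : (-k + 1 : ℤ) = -(k-1) := by ring
  rw [Set.indicator_apply, Set.indicator_apply]
  simp only [Set.mem_setOf_eq, Pi.one_apply, hexp]
  have hcast : ∀ m : ℤ, (((p:ℝ) ^ m : ℝ) : ℂ) = (p:ℂ) ^ m := by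
    intro m; push_cast; ring
  split_ifs with h1 h2 h2
  · push_cast; ring
  · exact absurd (le_trans h1 hmon) h2
  · push_cast; ring
  · ring
end

section
/- For every k ∈ ℕ and every σ ∈ ℝ, the weighted measure of the ball of radius p^k satisfies ∫_{{ξ : ‖ξ‖ ≤ p^k}} max(1, ‖ξ‖)^{2σ} dμ(ξ) = 1 + (1 − p^{−1})·Σ_{m=1}^{k} p^{(2σ+1)·m}. -/
/- Setting: `ℚ_[p]` the `p`-adic numbers with `‖p‖ = p⁻¹`, `μ` an additive Haar measure
normalized so that `μ(ℤ_p) = 1`, and `χ : ℚ_[p] → Circle` a continuous additive character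
trivial on `ℤ_p` but nontrivial on `p⁻¹ℤ_p`. -/

open MeasureTheory ENNReal Pointwise

namespace WBIaux

variable {p : ℕ} [Fact p.Prime]

def ball (p : ℕ) [Fact p.Prime] (n : ℕ) : Set ℚ_[p] := {x | ‖x‖ ≤ (p : ℝ) ^ (n : ℤ)}

lemma ball_meas (n : ℕ) : MeasurableSet (ball p n) :=
  (isClosed_le continuous_norm continuous_const).measurableSet

lemma one_lt_P : (1:ℝ) < (p:ℝ) := by
  exact_mod_cast (Fact.out : p.Prime).one_lt

lemma ball_succ_eq (n : ℕ) :
    ball p (n+1) = ⋃ j ∈ Finset.range p,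
      ((j : ℚ_[p]) * (p : ℚ_[p]) ^ (-((n:ℤ)+1))) +ᵥ ball p n := by
  have hp1 : (1:ℝ) < (p:ℝ) := one_lt_P
  have hp0 : (0:ℝ) < (p:ℝ) := lt_trans one_pos hp1
  ext x
  simp only [Set.mem_iUnion, Finset.mem_range, Set.mem_vadd_set_iff_neg_vadd_mem,
    vadd_eq_add, ball, Set.mem_setOf_eq]
  constructor
  · intro hx
    have hx' : ‖x‖ ≤ (p:ℝ) ^ ((n:ℤ)+1) := by push_cast at hx; exact hx
    have hz : ‖x * (p : ℚ_[p]) ^ ((n:ℤ)+1)‖ ≤ 1 := by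
      rw [norm_mul, Padic.norm_p_zpow]
      calc ‖x‖ * (p:ℝ) ^ (-((n:ℤ)+1)) ≤ (p:ℝ) ^ ((n:ℤ)+1) * (p:ℝ) ^ (-((n:ℤ)+1)) := by
            gcongr
        _ = 1 := by rw [← zpow_add₀ hp0.ne', add_neg_cancel, zpow_zero]
    set z : ℤ_[p] := ⟨x * (p : ℚ_[p]) ^ ((n:ℤ)+1), hz⟩ with hzdef
    haveI : NeZero p := ⟨(Fact.out : p.Prime).ne_zero⟩
    set j : ℕ := (PadicInt.toZMod z).val with hjdef
    refine ⟨j, ZMod.val_lt _, ?_⟩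
    have hspec : ‖z - (j : ℤ_[p])‖ < 1 := by
      have h := PadicInt.toZMod_spec z
      rw [PadicInt.maximalIdeal_eq_span_p, Ideal.mem_span_singleton,
        ← PadicInt.norm_lt_one_iff_dvd] at h
      rw [hjdef, ZMod.natCast_val]
      exact h
    have hle : ‖z - (j : ℤ_[p])‖ ≤ (p:ℝ)⁻¹ := by
      have := (PadicInt.norm_le_pow_iff_norm_lt_pow_add_one (z - (j : ℤ_[p])) (-1)).2
        (by simpa using hspec)
      simpa [zpow_neg_one] using this
    have key : ‖(x * (p : ℚ_[p]) ^ ((n:ℤ)+1)) - (j : ℚ_[p])‖ ≤ (p:ℝ)⁻¹ := by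
      have h2 : ‖(↑(z - (j : ℤ_[p])) : ℚ_[p])‖ ≤ (p:ℝ)⁻¹ := by
        rw [PadicInt.padic_norm_e_of_padicInt]; exact hle
      have h3 : (↑(z - (j : ℤ_[p])) : ℚ_[p]) = (x * (p : ℚ_[p]) ^ ((n:ℤ)+1)) - (j : ℚ_[p]) := by
        push_cast
        rfl
      rwa [h3] at h2
    have heq : -((j : ℚ_[p]) * (p : ℚ_[p]) ^ (-((n:ℤ)+1))) + x
        = ((x * (p : ℚ_[p]) ^ ((n:ℤ)+1)) - (j : ℚ_[p]))
          * (p : ℚ_[p]) ^ (-((n:ℤ)+1)) := by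
      have hpne : (p : ℚ_[p]) ≠ 0 :=
        (Nat.cast_ne_zero (R := ℚ_[p])).2 (Fact.out : p.Prime).ne_zero
      have hone : (p:ℚ_[p]) ^ ((n:ℤ)+1) * (p:ℚ_[p]) ^ (-((n:ℤ)+1)) = 1 := by
        rw [← zpow_add₀ hpne, add_neg_cancel, zpow_zero]
      rw [sub_mul, mul_assoc, hone, mul_one]
      ring
    rw [heq, norm_mul, Padic.norm_p_zpow, neg_neg]
    calc _ ≤ (p:ℝ)⁻¹ * (p:ℝ) ^ ((n:ℤ)+1) := by gcongr
      _ = (p:ℝ) ^ (n:ℤ) := by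
          rw [← zpow_neg_one, ← zpow_add₀ hp0.ne']; ring_nf
  · rintro ⟨j, hj, hmem⟩
    have h1 : ‖(j : ℚ_[p]) * (p : ℚ_[p]) ^ (-((n:ℤ)+1))‖ ≤ (p:ℝ) ^ ((n:ℤ)+1) := by
      rw [norm_mul, Padic.norm_p_zpow, neg_neg]
      calc ‖(j : ℚ_[p])‖ * (p:ℝ) ^ ((n:ℤ)+1) ≤ 1 * (p:ℝ) ^ ((n:ℤ)+1) := by
            gcongr
            exact_mod_cast Padic.norm_int_le_one (j : ℤ)
        _ = _ := one_mul _
    have h2 : ‖-((j : ℚ_[p]) * (p : ℚ_[p]) ^ (-((n:ℤ)+1))) + x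
        + ((j : ℚ_[p]) * (p : ℚ_[p]) ^ (-((n:ℤ)+1)))‖ ≤ (p:ℝ) ^ ((n:ℤ)+1) := by
      refine le_trans (Padic.nonarchimedean _ _) (max_le ?_ h1)
      refine le_trans hmem ?_
      exact zpow_le_zpow_right₀ (le_of_lt one_lt_P) (by omega)
    simpa [Nat.cast_add, Nat.cast_one] using h2

lemma ball_succ_disj (n : ℕ) :
    (↑(Finset.range p) : Set ℕ).PairwiseDisjoint
      (fun j => ((j : ℚ_[p]) * (p : ℚ_[p]) ^ (-((n:ℤ)+1))) +ᵥ ball p n) := by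
  have hp1 : (1:ℝ) < (p:ℝ) := one_lt_P
  have hp0 : (0:ℝ) < (p:ℝ) := lt_trans one_pos hp1
  intro i hi j hj hij
  simp only [Finset.coe_range, Set.mem_Iio] at hi hj
  rw [Function.onFun, Set.disjoint_left]
  rintro x hxi hxj
  rw [Set.mem_vadd_set_iff_neg_vadd_mem] at hxi hxj
  simp only [vadd_eq_add, ball, Set.mem_setOf_eq] at hxi hxj
  -- distance between centers
  have hnd : ¬ ((p:ℤ) ∣ ((i:ℤ) - j)) := by
    intro hdvd
    have : ((i:ℤ) - j) = 0 := Int.eq_zero_of_abs_lt_dvd hdvd (by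
      rw [abs_sub_lt_iff]; constructor <;> omega)
    omega
  have hnorm1 : ‖(((i:ℤ) - j : ℤ) : ℚ_[p])‖ = 1 := by
    refine le_antisymm (Padic.norm_int_le_one _) ?_
    by_contra h
    exact hnd (Padic.norm_intCast_lt_one_iff.1 (lt_of_not_ge h))
  have hcenters : ‖(i : ℚ_[p]) * (p : ℚ_[p]) ^ (-((n:ℤ)+1))
      - (j : ℚ_[p]) * (p : ℚ_[p]) ^ (-((n:ℤ)+1))‖ = (p:ℝ) ^ ((n:ℤ)+1) := by
    rw [← sub_mul, norm_mul, Padic.norm_p_zpow, neg_neg]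
    have : ((i:ℚ_[p]) - j) = (((i:ℤ) - j : ℤ) : ℚ_[p]) := by push_cast; ring
    rw [this, hnorm1, one_mul]
  have hle : ‖(i : ℚ_[p]) * (p : ℚ_[p]) ^ (-((n:ℤ)+1))
      - (j : ℚ_[p]) * (p : ℚ_[p]) ^ (-((n:ℤ)+1))‖ ≤ (p:ℝ) ^ (n:ℤ) := by
    have : (i : ℚ_[p]) * (p : ℚ_[p]) ^ (-((n:ℤ)+1))
        - (j : ℚ_[p]) * (p : ℚ_[p]) ^ (-((n:ℤ)+1))
        = -(-((i:ℚ_[p]) * (p : ℚ_[p]) ^ (-((n:ℤ)+1))) + x)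
          + (-((j:ℚ_[p]) * (p : ℚ_[p]) ^ (-((n:ℤ)+1))) + x) := by ring
    rw [this]
    refine le_trans (Padic.nonarchimedean _ _) (max_le ?_ hxj)
    rwa [norm_neg]
  rw [hcenters] at hle
  exact absurd hle (not_le.2 (zpow_lt_zpow_right₀ hp1 (by omega)))

lemma meas_ball (μ : Measure ℚ_[p]) [μ.IsAddHaarMeasure]
    (hμ : μ {x : ℚ_[p] | ‖x‖ ≤ 1} = 1) (n : ℕ) :
    μ (ball p n) = (p : ℝ≥0∞) ^ n := by
  induction n with
  | zero => simpa [ball] using hμ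
  | succ n ih =>
      rw [ball_succ_eq, measure_biUnion_finset (ball_succ_disj n)
        (fun j _ => (ball_meas n).const_vadd _)]
      simp only [measure_vadd]
      rw [Finset.sum_const, Finset.card_range, ih, nsmul_eq_mul, pow_succ]
      ring

lemma norm_annulus {x : ℚ_[p]} (k : ℕ) (h1 : ‖x‖ ≤ (p:ℝ) ^ ((k+1 : ℕ):ℤ))
    (h2 : ¬ ‖x‖ ≤ (p:ℝ) ^ (k:ℤ)) : ‖x‖ = (p:ℝ) ^ ((k+1:ℕ):ℤ) := by
  have hp1 : (1:ℝ) < (p:ℝ) := one_lt_P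
  have hx0 : x ≠ 0 := by
    rintro rfl
    exact h2 (by simpa using zpow_nonneg (le_of_lt (lt_trans one_pos hp1)) (k:ℤ))
  rw [Padic.norm_eq_zpow_neg_valuation hx0] at h1 h2 ⊢
  have hlt : (k:ℤ) < -x.valuation := by
    by_contra h
    exact h2 (zpow_le_zpow_right₀ hp1.le (not_lt.1 h))
  have hle : -x.valuation ≤ ((k+1:ℕ):ℤ) := by
    by_contra h
    exact absurd h1 (not_le.2 (zpow_lt_zpow_right₀ hp1 (not_le.1 h)))
  have : -x.valuation = ((k+1:ℕ):ℤ) := by push_cast at hle hlt ⊢; omega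
  rw [this]

lemma real_key (σ : ℝ) (k : ℕ) :
    ((p:ℝ) ^ ((k+1:ℕ):ℤ)) ^ (2*σ) * ((p:ℝ)^(k+1) - (p:ℝ)^k)
      = (1 - (p:ℝ)⁻¹) * (p:ℝ) ^ ((2*σ+1) * ((k+1:ℕ):ℝ)) := by
  have hp1 : (1:ℝ) < (p:ℝ) := one_lt_P
  have hp0 : (0:ℝ) < (p:ℝ) := lt_trans one_pos hp1
  have e1 : ((p:ℝ) ^ ((k+1:ℕ):ℤ)) = (p:ℝ) ^ (((k+1:ℕ)):ℝ) := by
    rw [zpow_natCast, Real.rpow_natCast]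
  have hsub : (p:ℝ)^(k+1) - (p:ℝ)^k = (1 - (p:ℝ)⁻¹) * (p:ℝ)^(k+1) := by
    field_simp
    ring
  rw [e1, ← Real.rpow_mul hp0.le, hsub, ← Real.rpow_natCast (p:ℝ) (k+1),
    show (2*σ+1) * ((k+1:ℕ):ℝ) = ((k+1:ℕ):ℝ) * (2*σ) + ((k+1:ℕ):ℝ) by ring,
    Real.rpow_add hp0]
  ring

lemma ofReal_pow_eq (n : ℕ) : ((p : ℝ≥0∞))^n = ENNReal.ofReal ((p:ℝ)^n) := by
  rw [ENNReal.ofReal_pow (by positivity), ENNReal.ofReal_natCast]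

end WBIaux

open WBIaux

/-- **Weighted measure of balls.** For every `k ∈ ℕ` and `σ ∈ ℝ`,
`∫_{{ξ : ‖ξ‖ ≤ p^k}} max(1,‖ξ‖)^{2σ} dμ(ξ) = 1 + (1 − p⁻¹)·Σ_{m=1}^{k} p^{(2σ+1)m}`. -/
theorem weighted_ball_integral {p : ℕ} [Fact p.Prime] (μ : Measure ℚ_[p])
    [μ.IsAddHaarMeasure] (hμ : μ {x : ℚ_[p] | ‖x‖ ≤ 1} = 1) (k : ℕ) (σ : ℝ) :
    (∫⁻ ξ in {ξ : ℚ_[p] | ‖ξ‖ ≤ (p : ℝ) ^ (k : ℤ)},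
        ENNReal.ofReal ((max 1 ‖ξ‖) ^ (2 * σ)) ∂μ) =
      ENNReal.ofReal
        (1 + (1 - (p : ℝ)⁻¹) * ∑ m ∈ Finset.Icc 1 k, (p : ℝ) ^ ((2 * σ + 1) * m)) := by
  have hp1 : (1:ℝ) < (p:ℝ) := one_lt_P
  have hp0 : (0:ℝ) < (p:ℝ) := lt_trans one_pos hp1
  have hpinv : (0:ℝ) ≤ 1 - (p:ℝ)⁻¹ := by
    have : (p:ℝ)⁻¹ ≤ 1 := inv_le_one_of_one_le₀ hp1.le
    linarith
  induction k with
  | zero =>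
    have h0 : (∫⁻ ξ in ball p 0, ENNReal.ofReal ((max 1 ‖ξ‖) ^ (2 * σ)) ∂μ)
        = ∫⁻ _ in ball p 0, 1 ∂μ := by
      refine setLIntegral_congr_fun (ball_meas 0) (fun ξ hξ => ?_)
      have : ‖ξ‖ ≤ 1 := by simpa [ball] using hξ
      rw [max_eq_left this, Real.one_rpow, ENNReal.ofReal_one]
    show (∫⁻ ξ in ball p 0, ENNReal.ofReal ((max 1 ‖ξ‖) ^ (2 * σ)) ∂μ) = _
    rw [h0, setLIntegral_one]
    have : ball p 0 = {x : ℚ_[p] | ‖x‖ ≤ 1} := by simp [ball]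
    rw [this, hμ]
    simp
  | succ k ih =>
    have hsub : ball p k ⊆ ball p (k+1) := fun x hx =>
      le_trans hx (zpow_le_zpow_right₀ hp1.le (by exact_mod_cast Nat.le_succ k))
    have hμk : μ (ball p k) ≠ ⊤ := by
      rw [meas_ball μ hμ]
      exact ENNReal.pow_ne_top (ENNReal.natCast_ne_top p)
    have hann : (∫⁻ ξ in ball p (k+1) \ ball p k,
        ENNReal.ofReal ((max 1 ‖ξ‖) ^ (2 * σ)) ∂μ)
        = ENNReal.ofReal ((1 - (p:ℝ)⁻¹) * (p:ℝ) ^ ((2*σ+1) * ((k+1:ℕ):ℝ))) := by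
      have hc : (∫⁻ ξ in ball p (k+1) \ ball p k,
          ENNReal.ofReal ((max 1 ‖ξ‖) ^ (2 * σ)) ∂μ)
          = ∫⁻ _ in ball p (k+1) \ ball p k,
              ENNReal.ofReal (((p:ℝ) ^ ((k+1:ℕ):ℤ)) ^ (2*σ)) ∂μ := by
        refine setLIntegral_congr_fun ((ball_meas (k+1)).diff (ball_meas k))
          (fun ξ hξ => ?_)
        obtain ⟨h1, h2⟩ := hξ
        have hnorm : ‖ξ‖ = (p:ℝ) ^ ((k+1:ℕ):ℤ) := norm_annulus k h1 h2
        rw [hnorm, max_eq_right]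
        exact one_le_zpow₀ hp1.le (by positivity)
      rw [hc, setLIntegral_const]
      have hmd : μ (ball p (k+1) \ ball p k)
          = ENNReal.ofReal ((p:ℝ)^(k+1) - (p:ℝ)^k) := by
        rw [measure_diff hsub (ball_meas k).nullMeasurableSet hμk,
          meas_ball μ hμ, meas_ball μ hμ, ofReal_pow_eq, ofReal_pow_eq,
          ← ENNReal.ofReal_sub _ (by positivity)]
      rw [hmd, ← ENNReal.ofReal_mul (by positivity), real_key]
    have hU : ball p (k+1) = ball p k ∪ (ball p (k+1) \ ball p k) :=
      (Set.union_diff_cancel hsub).symm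
    show (∫⁻ ξ in ball p (k+1), ENNReal.ofReal ((max 1 ‖ξ‖) ^ (2 * σ)) ∂μ) = _
    have ih' : (∫⁻ ξ in ball p k, ENNReal.ofReal ((max 1 ‖ξ‖) ^ (2 * σ)) ∂μ)
        = ENNReal.ofReal
          (1 + (1 - (p:ℝ)⁻¹) * ∑ m ∈ Finset.Icc 1 k, (p:ℝ) ^ ((2*σ+1) * m)) := ih
    rw [hU, lintegral_union ((ball_meas (k+1)).diff (ball_meas k))
      disjoint_sdiff_self_right, ih', hann,
      Finset.sum_Icc_succ_top (by omega : 1 ≤ k+1),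
      ← ENNReal.ofReal_add
        (show (0:ℝ) ≤ 1 + (1 - (p:ℝ)⁻¹) * ∑ m ∈ Finset.Icc 1 k, (p:ℝ) ^ ((2*σ+1) * m) from
          add_nonneg zero_le_one (mul_nonneg hpinv (Finset.sum_nonneg fun _ _ => by positivity)))
        (show (0:ℝ) ≤ (1 - (p:ℝ)⁻¹) * (p:ℝ) ^ ((2*σ+1) * ((k+1:ℕ):ℝ)) from
          mul_nonneg hpinv (by positivity))]
    congr 1
    push_cast
    ring
end

section
/- For every integer n ≥ 1 and every σ ∈ ℝ, one has ∫_{ℚ_p} max(1, ‖ξ‖)^{2σ}·|F(1_{{x : ‖x‖ = p^n}})(ξ)|² dμ(ξ) = p^n·(1 − p^{−1}); in particular, the value is independent of σ because F(1_{{x : ‖x‖ = p^n}}) is supported in the unit ball {ξ : ‖ξ‖ ≤ 1}. -/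
/- Setting: `ℚ_[p]` the `p`-adic numbers with `‖p‖ = p⁻¹`, `μ` an additive Haar measure
normalized so that `μ(ℤ_p) = 1`, and `χ : ℚ_[p] → Circle` a continuous additive character
trivial on `ℤ_p` but nontrivial on `p⁻¹ℤ_p`. -/

open MeasureTheory ENNReal

section Aux
variable {p : ℕ} [Fact p.Prime]

def Bl (p : ℕ) [Fact p.Prime] (k : ℤ) : Set ℚ_[p] := {x | ‖x‖ ≤ (p:ℝ)^k}

lemma measurableSet_Bl (k : ℤ) : MeasurableSet (Bl p k) :=
  (isClosed_le continuous_norm continuous_const).measurableSet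

lemma measure_Bl_succ (μ : Measure ℚ_[p]) [μ.IsAddHaarMeasure] (k : ℤ) :
    μ (Bl p (k+1)) = p * μ (Bl p k) := by
  classical
  set c : Fin p → ℚ_[p] := fun j => (j : ℚ_[p]) * (p:ℚ_[p])^(-(k+1)) with hc
  have hp1 : (1:ℝ) < p := by exact_mod_cast (Fact.out : p.Prime).one_lt
  have hppos : (0:ℝ) < p := by positivity
  have key : Bl p (k+1) = ⋃ j : Fin p, (fun x => (-(c j)) + x) ⁻¹' (Bl p k) := by
    ext x
    simp only [Set.mem_iUnion, Set.mem_preimage, Bl, Set.mem_setOf_eq, neg_add_eq_sub]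
    constructor
    · intro hx
      have hz : ‖x * (p:ℚ_[p])^(k+1)‖ ≤ 1 := by
        rw [norm_mul, Padic.norm_p_zpow]
        calc ‖x‖ * (p:ℝ)^(-(k+1)) ≤ (p:ℝ)^(k+1) * (p:ℝ)^(-(k+1)) := by
              apply mul_le_mul_of_nonneg_right hx (by positivity)
          _ = 1 := by rw [← zpow_add₀ (ne_of_gt hppos), add_neg_cancel, zpow_zero]
      set z : ℤ_[p] := ⟨x * (p:ℚ_[p])^(k+1), hz⟩ with hzdef
      refine ⟨⟨z.appr 1, by simpa using z.appr_lt 1⟩, ?_⟩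
      have hspec : ‖z - (z.appr 1 : ℤ_[p])‖ ≤ (p:ℝ)^(-(1:ℕ):ℤ) :=
        (PadicInt.norm_le_pow_iff_mem_span_pow _ 1).mpr (by simpa using PadicInt.appr_spec 1 z)
      have hpne : (p:ℚ_[p]) ≠ 0 := by
        exact_mod_cast (Fact.out : p.Prime).ne_zero
      have hxe : x = ((z : ℚ_[p])) * (p:ℚ_[p])^(-(k+1)) := by
        show x = (x * (p:ℚ_[p])^(k+1)) * _
        rw [mul_assoc, ← zpow_add₀ hpne, add_neg_cancel, zpow_zero, mul_one]
      have hxc : x - c ⟨z.appr 1, by simpa using z.appr_lt 1⟩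
          = ((z - (z.appr 1 : ℤ_[p]) : ℤ_[p]) : ℚ_[p]) * (p:ℚ_[p])^(-(k+1)) := by
        rw [hc]
        conv_lhs => rw [hxe]
        push_cast
        ring
      rw [hxc, norm_mul, Padic.norm_p_zpow, neg_neg]
      calc ‖((z - (z.appr 1 : ℤ_[p]) : ℤ_[p]) : ℚ_[p])‖ * (p:ℝ)^(k+1)
          ≤ (p:ℝ)^(-(1:ℕ):ℤ) * (p:ℝ)^(k+1) := by
            apply mul_le_mul_of_nonneg_right _ (by positivity)
            rw [← PadicInt.norm_def]; exact hspec
        _ = (p:ℝ)^k := by rw [← zpow_add₀ (ne_of_gt hppos)]; norm_num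
    · rintro ⟨j, hj⟩
      have hcj : ‖c j‖ ≤ (p:ℝ)^(k+1) := by
        rw [hc, norm_mul, Padic.norm_p_zpow, neg_neg]
        have : ‖((j:ℕ):ℚ_[p])‖ ≤ 1 := by
          have := Padic.norm_int_le_one (p := p) (j : ℤ)
          simpa using this
        calc ‖((j:ℕ):ℚ_[p])‖ * (p:ℝ)^(k+1) ≤ 1 * (p:ℝ)^(k+1) :=
              mul_le_mul_of_nonneg_right this (by positivity)
          _ = (p:ℝ)^(k+1) := one_mul _
      calc ‖x‖ = ‖(x - c j) + c j‖ := by ring_nf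
        _ ≤ max ‖x - c j‖ ‖c j‖ := Padic.nonarchimedean _ _
        _ ≤ (p:ℝ)^(k+1) := max_le (hj.trans (zpow_le_zpow_right₀ (le_of_lt hp1) (by omega))) hcj
  rw [key, measure_iUnion ?_ (fun j => (measurableSet_Bl k).preimage (measurable_const_add _))]
  · simp only [measure_preimage_add]
    rw [tsum_fintype]
    simp [Finset.sum_const, mul_comm]
  · intro i j hij
    simp only [Set.disjoint_left, Set.mem_preimage, Bl, Set.mem_setOf_eq, neg_add_eq_sub]
    intro x hxi hxj
    apply hij
    have hd : ‖c i - c j‖ ≤ (p:ℝ)^k := by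
      calc ‖c i - c j‖ = ‖(c i - x) + (x - c j)‖ := by ring_nf
        _ ≤ max ‖c i - x‖ ‖x - c j‖ := Padic.nonarchimedean _ _
        _ ≤ (p:ℝ)^k := max_le (by rwa [norm_sub_rev]) hxj
    have : ‖(((i:ℤ) - (j:ℤ) : ℤ) : ℚ_[p])‖ ≤ (p:ℝ)^(-(1:ℕ):ℤ) := by
      have hci : c i - c j = (((i:ℤ) - (j:ℤ) : ℤ) : ℚ_[p]) * (p:ℚ_[p])^(-(k+1)) := by
        rw [hc]; push_cast; ring
      rw [hci, norm_mul, Padic.norm_p_zpow, neg_neg] at hd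
      have hpk : (0:ℝ) < (p:ℝ)^(k+1) := by positivity
      rw [← le_div_iff₀ hpk] at hd
      calc ‖(((i:ℤ) - (j:ℤ) : ℤ) : ℚ_[p])‖ ≤ (p:ℝ)^k / (p:ℝ)^(k+1) := hd
        _ = (p:ℝ)^(-(1:ℕ):ℤ) := by
            rw [div_eq_iff (ne_of_gt hpk), ← zpow_add₀ (ne_of_gt hppos)]
            norm_num
    rw [Padic.norm_int_le_pow_iff_dvd, pow_one] at this
    have hi := i.isLt; have hj' := j.isLt
    have h0 : (i:ℤ) - (j:ℤ) = 0 := Int.eq_zero_of_abs_lt_dvd this (by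
      rw [abs_sub_lt_iff]; constructor <;> [skip; skip] <;> omega)
    ext; omega

lemma measure_Bl (μ : Measure ℚ_[p]) [μ.IsAddHaarMeasure]
    (hμ : μ {x : ℚ_[p] | ‖x‖ ≤ 1} = 1) (k : ℤ) :
    μ (Bl p k) = ENNReal.ofReal ((p:ℝ)^k) := by
  have hppos : (0:ℝ) < p := by exact_mod_cast (Fact.out : p.Prime).pos
  have hcast : (p:ℝ≥0∞) = ENNReal.ofReal (p:ℝ) := by
    rw [ENNReal.ofReal_natCast]
  have hzero : μ (Bl p 0) = 1 := by
    have : Bl p 0 = {x : ℚ_[p] | ‖x‖ ≤ 1} := by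
      ext x; simp [Bl]
    rw [this, hμ]
  induction k using Int.induction_on with
  | zero => simpa using hzero
  | succ k ih =>
      rw [measure_Bl_succ μ k, ih, hcast, ← ENNReal.ofReal_mul hppos.le]
      congr 1
      rw [zpow_add_one₀ (ne_of_gt hppos)]
      ring
  | pred k ih =>
      have hstep := measure_Bl_succ μ (-(k+1) : ℤ)
      have he : (-(k+1) : ℤ) + 1 = (-k : ℤ) := by ring
      rw [he, ih] at hstep
      have hp0 : (p:ℝ≥0∞) ≠ 0 := by
        simp [(Fact.out : p.Prime).ne_zero]
      refine (ENNReal.mul_right_inj hp0 (by simp)).mp ?_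
      have he2 : (-(k:ℤ) - 1) = -((k:ℤ)+1) := by ring
      rw [he2, ← hstep, hcast, ← ENNReal.ofReal_mul hppos.le]
      congr 1
      rw [show (-(k:ℤ)) = (-((k:ℤ)+1)) + 1 by ring, zpow_add_one₀ (ne_of_gt hppos)]
      ring

lemma measure_Bl_ne_top (μ : Measure ℚ_[p]) [μ.IsAddHaarMeasure]
    (hμ : μ {x : ℚ_[p] | ‖x‖ ≤ 1} = 1) (k : ℤ) : μ (Bl p k) ≠ ⊤ := by
  rw [measure_Bl μ hμ k]; exact ENNReal.ofReal_ne_top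

variable (μ : Measure ℚ_[p]) [μ.IsAddHaarMeasure] (χ : AddChar ℚ_[p] Circle)

lemma indicator_mul_char (k : ℤ) (ξ : ℚ_[p]) (x : ℚ_[p]) :
    (Bl p k).indicator (1 : ℚ_[p] → ℂ) x * (starRingEnd ℂ) (χ (ξ * x) : ℂ)
      = (Bl p k).indicator (fun x => (starRingEnd ℂ) (χ (ξ * x) : ℂ)) x := by
  by_cases hx : x ∈ Bl p k <;> simp [hx]

lemma integrable_ball_char (hμ : μ {x : ℚ_[p] | ‖x‖ ≤ 1} = 1) (hχc : Continuous χ)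
    (k : ℤ) (ξ : ℚ_[p]) :
    Integrable (fun x => (Bl p k).indicator (1 : ℚ_[p] → ℂ) x
      * (starRingEnd ℂ) (χ (ξ * x) : ℂ)) μ := by
  simp_rw [indicator_mul_char]
  rw [integrable_indicator_iff (measurableSet_Bl k)]
  apply Measure.integrableOn_of_bounded (M := 1) (measure_Bl_ne_top μ hμ k)
  · apply Continuous.aestronglyMeasurable
    exact Complex.continuous_conj.comp (continuous_subtype_val.comp
      (hχc.comp (continuous_mul_left ξ)))
  · filter_upwards with x
    simp [Circle.norm_coe]

lemma FT_ball (hμ : μ {x : ℚ_[p] | ‖x‖ ≤ 1} = 1)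
    (hχ1 : ∀ x : ℚ_[p], ‖x‖ ≤ 1 → χ x = 1)
    (hχ2 : ∃ x : ℚ_[p], ‖x‖ ≤ p ∧ χ x ≠ 1) (k : ℤ) (ξ : ℚ_[p]) :
    FT μ χ ((Bl p k).indicator 1) ξ
      = if ‖ξ‖ ≤ (p:ℝ)^(-k) then (((p:ℝ)^k : ℝ) : ℂ) else 0 := by
  have hppos : (0:ℝ) < p := by exact_mod_cast (Fact.out : p.Prime).pos
  unfold FT
  simp_rw [indicator_mul_char χ k ξ]
  split_ifs with h
  · rw [integral_indicator (measurableSet_Bl k),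
      setIntegral_congr_fun (measurableSet_Bl k) (g := fun _ => (1:ℂ)) ?_]
    · rw [setIntegral_const, measureReal_def, measure_Bl μ hμ k,
        ENNReal.toReal_ofReal (show (0:ℝ) ≤ (p:ℝ)^k by positivity)]
      simp [Complex.real_smul]
    · intro x hx
      have hx1 : ‖ξ * x‖ ≤ 1 := by
        rw [norm_mul]
        calc ‖ξ‖ * ‖x‖ ≤ (p:ℝ)^(-k) * (p:ℝ)^k :=
              mul_le_mul h hx (norm_nonneg _) (by positivity)
          _ = 1 := by rw [← zpow_add₀ (ne_of_gt hppos)]; simp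
      simp [hχ1 _ hx1]
  · -- vanishing case
    have hξ0 : ξ ≠ 0 := by
      intro h0; apply h; rw [h0, norm_zero]; positivity
    have hξge : (p:ℝ)^(-k+1) ≤ ‖ξ‖ := by
      by_contra hlt
      push_neg at hlt
      exact h ((Padic.norm_le_pow_iff_norm_lt_pow_add_one ξ (-k)).mpr hlt)
    obtain ⟨x0, hx0n, hx0ne⟩ := hχ2
    set y := x0 * ξ⁻¹ with hy
    have hξy : ξ * y = x0 := by rw [hy]; field_simp
    have hyn : ‖y‖ ≤ (p:ℝ)^k := by
      rw [hy, norm_mul, norm_inv]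
      have h1 : ‖ξ‖⁻¹ ≤ ((p:ℝ)^(-k+1))⁻¹ :=
        inv_anti₀ (by positivity) hξge
      calc ‖x0‖ * ‖ξ‖⁻¹ ≤ (p:ℝ) * ((p:ℝ)^(-k+1))⁻¹ :=
            mul_le_mul hx0n h1 (by positivity) hppos.le
        _ = (p:ℝ)^k := by
            rw [← zpow_neg, mul_comm, ← zpow_add_one₀ (ne_of_gt hppos)]
            congr 1
            ring
    set F : ℚ_[p] → ℂ := fun x => (Bl p k).indicator (fun x => (starRingEnd ℂ) (χ (ξ * x) : ℂ)) x with hF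
    set c : ℂ := (starRingEnd ℂ) (χ (ξ * y) : ℂ) with hcdef
    have hshift : ∀ x, F (x + y) = c * F x := by
      intro x
      by_cases hx : x ∈ Bl p k
      · have hxy : x + y ∈ Bl p k := by
          calc ‖x + y‖ ≤ max ‖x‖ ‖y‖ := Padic.nonarchimedean _ _
            _ ≤ (p:ℝ)^k := max_le hx hyn
        rw [hF]
        simp only [Set.indicator_of_mem hx, Set.indicator_of_mem hxy]
        rw [mul_add, AddChar.map_add_eq_mul, hcdef]
        push_cast
        rw [map_mul]
        ring
      · have hxy : x + y ∉ Bl p k := by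
          intro hmem
          apply hx
          have : x = (x + y) - y := by ring
          rw [this]
          calc ‖(x+y) - y‖ ≤ max ‖x+y‖ ‖y‖ := by
                rw [sub_eq_add_neg]
                calc ‖(x+y) + -y‖ ≤ max ‖x+y‖ ‖-y‖ := Padic.nonarchimedean _ _
                  _ = max ‖x+y‖ ‖y‖ := by rw [norm_neg]
            _ ≤ (p:ℝ)^k := max_le hmem hyn
        rw [hF]
        simp only [Set.indicator_of_notMem hx, Set.indicator_of_notMem hxy, mul_zero]
    have heq : (∫ x, F x ∂μ) = c * ∫ x, F x ∂μ := by
      conv_lhs => rw [← integral_add_right_eq_self F y]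
      simp_rw [hshift]
      rw [integral_const_mul]
    have hc1 : c ≠ 1 := by
      intro hcc
      apply hx0ne
      have h2 : (χ (ξ * y) : ℂ) = 1 := by
        have h3 := congrArg (starRingEnd ℂ) hcc
        rw [hcdef] at h3
        simpa using h3
      rw [hξy] at h2
      ext
      simpa using h2
    have : (1 - c) * (∫ x, F x ∂μ) = 0 := by
      rw [sub_mul, one_mul, ← heq, sub_self]
    rcases mul_eq_zero.mp this with h1 | h2
    · exact absurd (by linear_combination -h1 : c = 1) hc1
    · exact h2

lemma indicator_sphere (n : ℕ) (hn : 1 ≤ n) :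
    (Set.indicator {x : ℚ_[p] | ‖x‖ = (p:ℝ)^(n:ℤ)} (1 : ℚ_[p] → ℂ))
      = fun x => (Bl p (n:ℤ)).indicator 1 x - (Bl p ((n:ℤ)-1)).indicator 1 x := by
  funext x
  have hmem1 : (x ∈ Bl p (n:ℤ)) = (‖x‖ ≤ (p:ℝ)^(n:ℤ)) := rfl
  have hmem2 : (x ∈ Bl p ((n:ℤ)-1)) = (‖x‖ ≤ (p:ℝ)^((n:ℤ)-1)) := rfl
  by_cases hx : ‖x‖ = (p:ℝ)^(n:ℤ)
  · have h1 : x ∈ Bl p (n:ℤ) := le_of_eq hx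
    have h2 : x ∉ Bl p ((n:ℤ)-1) := by
      intro hmem
      have hlt : ‖x‖ < (p:ℝ)^(n:ℤ) := by
        rw [Padic.norm_lt_pow_iff_norm_le_pow_sub_one]
        exact hmem
      exact absurd hx (ne_of_lt hlt)
    rw [Set.indicator_of_mem (show x ∈ {x : ℚ_[p] | ‖x‖ = (p:ℝ)^(n:ℤ)} from hx),
      Set.indicator_of_mem h1, Set.indicator_of_notMem h2]
    simp
  · by_cases hx2 : ‖x‖ ≤ (p:ℝ)^((n:ℤ)-1)
    · have h1 : x ∈ Bl p (n:ℤ) := by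
        refine le_trans hx2 ?_
        have hp1 : (1:ℝ) < p := by exact_mod_cast (Fact.out : p.Prime).one_lt
        exact zpow_le_zpow_right₀ hp1.le (by omega)
      rw [Set.indicator_of_notMem (show x ∉ {x : ℚ_[p] | ‖x‖ = (p:ℝ)^(n:ℤ)} from hx),
        Set.indicator_of_mem h1, Set.indicator_of_mem (show x ∈ Bl p ((n:ℤ)-1) from hx2)]
      simp
    · have h1 : x ∉ Bl p (n:ℤ) := by
        intro hmem
        rcases lt_or_eq_of_le (show ‖x‖ ≤ (p:ℝ)^(n:ℤ) from hmem) with hlt | heq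
        · exact hx2 ((Padic.norm_lt_pow_iff_norm_le_pow_sub_one x (n:ℤ)).mp hlt)
        · exact hx heq
      have h2 : x ∉ Bl p ((n:ℤ)-1) := hx2
      rw [Set.indicator_of_notMem (show x ∉ {x : ℚ_[p] | ‖x‖ = (p:ℝ)^(n:ℤ)} from hx),
        Set.indicator_of_notMem h1, Set.indicator_of_notMem h2]
      simp

lemma FT_sphere (hμ : μ {x : ℚ_[p] | ‖x‖ ≤ 1} = 1) (hχc : Continuous χ)
    (hχ1 : ∀ x : ℚ_[p], ‖x‖ ≤ 1 → χ x = 1)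
    (hχ2 : ∃ x : ℚ_[p], ‖x‖ ≤ p ∧ χ x ≠ 1) (n : ℕ) (hn : 1 ≤ n) (ξ : ℚ_[p]) :
    FT μ χ (Set.indicator {x : ℚ_[p] | ‖x‖ = (p:ℝ)^(n:ℤ)} 1) ξ
      = (if ‖ξ‖ ≤ (p:ℝ)^(-(n:ℤ)) then (((p:ℝ)^(n:ℤ) : ℝ) : ℂ) else 0)
        - (if ‖ξ‖ ≤ (p:ℝ)^(-((n:ℤ)-1)) then (((p:ℝ)^((n:ℤ)-1) : ℝ) : ℂ) else 0) := by
  rw [show (Set.indicator {x : ℚ_[p] | ‖x‖ = (p:ℝ)^(n:ℤ)} 1 : ℚ_[p] → ℂ)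
      = fun x => (Bl p (n:ℤ)).indicator 1 x - (Bl p ((n:ℤ)-1)).indicator 1 x from
      indicator_sphere n hn]
  have h1 := integrable_ball_char μ χ hμ hχc (n:ℤ) ξ
  have h2 := integrable_ball_char μ χ hμ hχc ((n:ℤ)-1) ξ
  unfold FT
  simp_rw [sub_mul]
  rw [integral_sub h1 h2]
  rw [show (∫ x, (Bl p (n:ℤ)).indicator 1 x * (starRingEnd ℂ) (χ (ξ * x) : ℂ) ∂μ)
      = FT μ χ ((Bl p (n:ℤ)).indicator 1) ξ from rfl,
    show (∫ x, (Bl p ((n:ℤ)-1)).indicator 1 x * (starRingEnd ℂ) (χ (ξ * x) : ℂ) ∂μ)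
      = FT μ χ ((Bl p ((n:ℤ)-1)).indicator 1) ξ from rfl,
    FT_ball μ χ hμ hχ1 hχ2, FT_ball μ χ hμ hχ1 hχ2]

theorem besselNorm_sphere_indicator' (hμ : μ {x : ℚ_[p] | ‖x‖ ≤ 1} = 1)
    (hχc : Continuous χ)
    (hχ1 : ∀ x : ℚ_[p], ‖x‖ ≤ 1 → χ x = 1)
    (hχ2 : ∃ x : ℚ_[p], ‖x‖ ≤ p ∧ χ x ≠ 1)
    (n : ℕ) (hn : 1 ≤ n) (σ : ℝ) :
    (∫⁻ ξ, ENNReal.ofReal ((max 1 ‖ξ‖) ^ (2 * σ)) *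
        (‖FT μ χ (Set.indicator {x : ℚ_[p] | ‖x‖ = (p : ℝ) ^ (n : ℤ)} 1) ξ‖₊ : ℝ≥0∞) ^ 2 ∂μ) =
      ENNReal.ofReal ((p : ℝ) ^ (n : ℤ) * (1 - (p : ℝ)⁻¹)) := by
  have hp1 : (1:ℝ) < p := by exact_mod_cast (Fact.out : p.Prime).one_lt
  have hppos : (0:ℝ) < p := by positivity
  set m : ℤ := (n:ℤ) with hm
  have hm1 : 1 ≤ m := by omega
  set a : ℝ := ((p:ℝ)^m - (p:ℝ)^(m-1))^2 with ha
  set b : ℝ := ((p:ℝ)^(m-1))^2 with hb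
  have hsub : (p:ℝ)^(m-1) ≤ (p:ℝ)^m := zpow_le_zpow_right₀ hp1.le (by omega)
  have hanneg : 0 ≤ a := sq_nonneg _
  have hbnneg : 0 ≤ b := sq_nonneg _
  set D : Set ℚ_[p] := Bl p (-(m-1)) \ Bl p (-m) with hD
  have hkey : ∀ ξ : ℚ_[p],
      ENNReal.ofReal ((max 1 ‖ξ‖) ^ (2 * σ)) *
        (‖FT μ χ (Set.indicator {x : ℚ_[p] | ‖x‖ = (p : ℝ) ^ (n : ℤ)} 1) ξ‖₊ : ℝ≥0∞) ^ 2
      = (Bl p (-m)).indicator (fun _ => ENNReal.ofReal a) ξ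
        + D.indicator (fun _ => ENNReal.ofReal b) ξ := by
    intro ξ
    rw [FT_sphere μ χ hμ hχc hχ1 hχ2 n hn ξ]
    by_cases h1 : ‖ξ‖ ≤ (p:ℝ)^(-m)
    · have h2 : ‖ξ‖ ≤ (p:ℝ)^(-(m-1)) := h1.trans (zpow_le_zpow_right₀ hp1.le (by omega))
      have hle1 : ‖ξ‖ ≤ 1 := h1.trans (by
        calc (p:ℝ)^(-m) ≤ (p:ℝ)^(0:ℤ) := zpow_le_zpow_right₀ hp1.le (by omega)
          _ = 1 := zpow_zero _)
      rw [if_pos h1, if_pos h2, max_eq_left hle1, Real.one_rpow, ENNReal.ofReal_one, one_mul]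
      rw [Set.indicator_of_mem (show ξ ∈ Bl p (-m) from h1),
        Set.indicator_of_notMem (show ξ ∉ D from fun hd => hd.2 h1), add_zero]
      rw [show (((p:ℝ)^m : ℝ) : ℂ) - (((p:ℝ)^(m-1) : ℝ) : ℂ)
          = (((p:ℝ)^m - (p:ℝ)^(m-1) : ℝ) : ℂ) by push_cast; ring]
      rw [Complex.nnnorm_real, ← enorm_eq_nnnorm,
        Real.enorm_eq_ofReal (by linarith), ← ENNReal.ofReal_pow (by linarith)]
    · by_cases h2 : ‖ξ‖ ≤ (p:ℝ)^(-(m-1))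
      · have hle1 : ‖ξ‖ ≤ 1 := h2.trans (by
          calc (p:ℝ)^(-(m-1)) ≤ (p:ℝ)^(0:ℤ) := zpow_le_zpow_right₀ hp1.le (by omega)
            _ = 1 := zpow_zero _)
        rw [if_neg h1, if_pos h2, max_eq_left hle1, Real.one_rpow, ENNReal.ofReal_one, one_mul]
        rw [Set.indicator_of_notMem (show ξ ∉ Bl p (-m) from h1),
          Set.indicator_of_mem (show ξ ∈ D from ⟨h2, h1⟩), zero_add]
        rw [zero_sub, nnnorm_neg, Complex.nnnorm_real, ← enorm_eq_nnnorm,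
          Real.enorm_eq_ofReal (by positivity), ← ENNReal.ofReal_pow (by positivity)]
      · rw [if_neg h1, if_neg h2, sub_zero, nnnorm_zero]
        rw [Set.indicator_of_notMem (show ξ ∉ Bl p (-m) from h1),
          Set.indicator_of_notMem (show ξ ∉ D from fun hd => h2 hd.1)]
        simp
  calc (∫⁻ ξ, ENNReal.ofReal ((max 1 ‖ξ‖) ^ (2 * σ)) *
        (‖FT μ χ (Set.indicator {x : ℚ_[p] | ‖x‖ = (p : ℝ) ^ (n : ℤ)} 1) ξ‖₊ : ℝ≥0∞) ^ 2 ∂μ)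
      = ∫⁻ ξ, ((Bl p (-m)).indicator (fun _ => ENNReal.ofReal a) ξ
          + D.indicator (fun _ => ENNReal.ofReal b) ξ) ∂μ := lintegral_congr hkey
    _ = (∫⁻ ξ, (Bl p (-m)).indicator (fun _ => ENNReal.ofReal a) ξ ∂μ)
          + ∫⁻ ξ, D.indicator (fun _ => ENNReal.ofReal b) ξ ∂μ :=
        lintegral_add_left (measurable_const.indicator (measurableSet_Bl _)) _
    _ = ENNReal.ofReal a * μ (Bl p (-m)) + ENNReal.ofReal b * μ D := by
        rw [lintegral_indicator_const (measurableSet_Bl _),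
          lintegral_indicator_const ((measurableSet_Bl _).diff (measurableSet_Bl _))]
    _ = ENNReal.ofReal ((p : ℝ) ^ (n : ℤ) * (1 - (p : ℝ)⁻¹)) := by
        have hsubset : Bl p (-m) ⊆ Bl p (-(m-1)) := by
          intro x hx
          exact le_trans hx (zpow_le_zpow_right₀ hp1.le (by omega))
        have hμD : μ D = ENNReal.ofReal ((p:ℝ)^(-(m-1)) - (p:ℝ)^(-m)) := by
          rw [hD, measure_diff hsubset (measurableSet_Bl _).nullMeasurableSet
            (measure_Bl_ne_top μ hμ _), measure_Bl μ hμ, measure_Bl μ hμ,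
            ← ENNReal.ofReal_sub _ (by positivity)]
        rw [hμD, measure_Bl μ hμ, ← ENNReal.ofReal_mul hanneg, ← ENNReal.ofReal_mul hbnneg,
          ← ENNReal.ofReal_add (by positivity) ?hnn]
        case hnn =>
          have : (p:ℝ)^(-m) ≤ (p:ℝ)^(-(m-1)) := zpow_le_zpow_right₀ hp1.le (by omega)
          have := sub_nonneg.mpr this
          positivity
        congr 1
        have hpne : (p:ℝ) ≠ 0 := ne_of_gt hppos
        have hPne : (p:ℝ)^m ≠ 0 := zpow_ne_zero _ hpne
        rw [ha, hb]
        rw [show (m-1 : ℤ) = m + (-1) by ring, zpow_add₀ hpne, zpow_neg_one,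
          show (-(m + (-1)) : ℤ) = (-m) + 1 by ring, zpow_add₀ hpne, zpow_one,
          zpow_neg, ← hm]
        field_simp
        ring

end Aux

/-- **Bessel-potential norm of sphere indicators.** For every `n ≥ 1` and every `σ ∈ ℝ`,
`∫ max(1,‖ξ‖)^{2σ}·|F(1_{{x : ‖x‖ = p^n}})(ξ)|² dμ(ξ) = p^n·(1 − p⁻¹)`; in particular the
value is independent of `σ`, since `F(1_{{x : ‖x‖ = p^n}})` is supported in the unit ball. -/
theorem besselNorm_sphere_indicator {p : ℕ} [Fact p.Prime] (μ : Measure ℚ_[p])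
    [μ.IsAddHaarMeasure] (hμ : μ {x : ℚ_[p] | ‖x‖ ≤ 1} = 1)
    (χ : AddChar ℚ_[p] Circle) (hχc : Continuous χ)
    (hχ1 : ∀ x : ℚ_[p], ‖x‖ ≤ 1 → χ x = 1)
    (hχ2 : ∃ x : ℚ_[p], ‖x‖ ≤ p ∧ χ x ≠ 1)
    (n : ℕ) (hn : 1 ≤ n) (σ : ℝ) :
    (∫⁻ ξ, ENNReal.ofReal ((max 1 ‖ξ‖) ^ (2 * σ)) *
        (‖FT μ χ (Set.indicator {x : ℚ_[p] | ‖x‖ = (p : ℝ) ^ (n : ℤ)} 1) ξ‖₊ : ℝ≥0∞) ^ 2 ∂μ) =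
      ENNReal.ofReal ((p : ℝ) ^ (n : ℤ) * (1 - (p : ℝ)⁻¹)) := by
  exact besselNorm_sphere_indicator' μ χ hμ hχc hχ1 hχ2 n hn σ
end

section
/- If f : ℚ_p → ℂ is locally constant and has compact support, then its Fourier transform Ff is also locally constant and has compact support. -/
/- Setting: `ℚ_[p]` the `p`-adic numbers with `‖p‖ = p⁻¹`, `μ` an additive Haar measure
normalized so that `μ(ℤ_p) = 1`, and `χ : ℚ_[p] → Circle` a continuous additive character
trivial on `ℤ_p` but nontrivial on `p⁻¹ℤ_p`. -/

open MeasureTheory ENNReal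

open Metric in
/-- A locally constant function with compact support is uniformly locally constant. -/
lemma uniform_locallyConstant_aux {p : ℕ} [Fact p.Prime] (f : ℚ_[p] → ℂ)
    (hlc : IsLocallyConstant f) (hcs : HasCompactSupport f) :
    ∃ δ > (0:ℝ), ∀ x t : ℚ_[p], ‖t‖ ≤ δ → f (x + t) = f x := by
  obtain ⟨δ, hδ, hcov⟩ := lebesgue_number_lemma_of_metric (c := fun y : ℚ_[p] => f ⁻¹' {f y})
    hcs (fun y => hlc {f y}) (fun x _ => Set.mem_iUnion.2 ⟨x, rfl⟩)
  have key : ∀ x ∈ tsupport f, ∀ t : ℚ_[p], ‖t‖ ≤ δ / 2 → f (x + t) = f x := by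
    intro x hx t ht
    obtain ⟨y, hy⟩ := hcov x hx
    have h1 : x + t ∈ ball x δ := by
      simp only [mem_ball, dist_eq_norm]
      simpa using lt_of_le_of_lt ht (by linarith)
    have h2 : x ∈ ball x δ := mem_ball_self hδ
    have := hy h1; have := hy h2
    simp only [Set.mem_preimage, Set.mem_singleton_iff] at *
    rw [hy h1, hy h2]
  refine ⟨δ / 2, by linarith, fun x t ht => ?_⟩
  by_cases hx : x ∈ tsupport f
  · exact key x hx t ht
  · by_cases hxt : x + t ∈ tsupport f
    · have := key (x + t) hxt (-t) (by simpa using ht)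
      simpa using this.symm
    · rw [image_eq_zero_of_notMem_tsupport hx, image_eq_zero_of_notMem_tsupport hxt]

open Metric in
lemma FT_isLocallyConstant_aux {p : ℕ} [Fact p.Prime] (μ : Measure ℚ_[p])
    [μ.IsAddHaarMeasure] (χ : AddChar ℚ_[p] Circle)
    (hχ1 : ∀ x : ℚ_[p], ‖x‖ ≤ 1 → χ x = 1)
    (f : ℚ_[p] → ℂ) (hcs : HasCompactSupport f) :
    IsLocallyConstant (FT μ χ f) := by
  obtain ⟨r, hr⟩ := hcs.isBounded.subset_closedBall 0
  set R : ℝ := max r 1 with hR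
  have hRpos : (0:ℝ) < R := lt_of_lt_of_le one_pos (le_max_right _ _)
  rw [IsLocallyConstant.iff_exists_open]
  intro ξ
  refine ⟨ball ξ (1/R), isOpen_ball, mem_ball_self (by positivity), fun ξ' hξ' => ?_⟩
  unfold FT
  congr 1
  funext x
  by_cases hx : f x = 0
  · simp [hx]
  · have hxR : ‖x‖ ≤ R := by
      have : x ∈ closedBall (0:ℚ_[p]) r := hr (subset_tsupport f hx)
      simp only [mem_closedBall, dist_zero_right] at this
      exact this.trans (le_max_left _ _)
    have hsmall : ‖(ξ' - ξ) * x‖ ≤ 1 := by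
      rw [norm_mul]
      have h1 : ‖ξ' - ξ‖ < 1/R := by simpa [dist_eq_norm] using hξ'
      calc ‖ξ' - ξ‖ * ‖x‖ ≤ (1/R) * R :=
            mul_le_mul h1.le hxR (norm_nonneg _) (by positivity)
        _ = 1 := by field_simp
    have hchi : χ ((ξ' - ξ) * x) = 1 := hχ1 _ hsmall
    have : χ (ξ' * x) = χ (ξ * x) := by
      have : ξ' * x = (ξ' - ξ) * x + ξ * x := by ring
      rw [this, AddChar.map_add_eq_mul, hchi, one_mul]
    rw [this]

open Metric in
lemma FT_hasCompactSupport_aux {p : ℕ} [Fact p.Prime] (μ : Measure ℚ_[p])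
    [μ.IsAddHaarMeasure] (χ : AddChar ℚ_[p] Circle)
    (hχ2 : ∃ x : ℚ_[p], ‖x‖ ≤ p ∧ χ x ≠ 1)
    (f : ℚ_[p] → ℂ)
    (huni : ∃ δ > (0:ℝ), ∀ x t : ℚ_[p], ‖t‖ ≤ δ → f (x + t) = f x) :
    HasCompactSupport (FT μ χ f) := by
  obtain ⟨δ, hδ, hf⟩ := huni
  obtain ⟨x₀, hx₀, hx₀ne⟩ := hχ2
  have hp : (0:ℝ) < p := by exact_mod_cast (Fact.out : p.Prime).pos
  set R : ℝ := max (p / δ) 1 with hR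
  have hRpos : (0:ℝ) < R := lt_of_lt_of_le one_pos (le_max_right _ _)
  apply HasCompactSupport.intro (isCompact_closedBall (0:ℚ_[p]) R)
  intro ξ hξ
  simp only [mem_closedBall, dist_zero_right, not_le] at hξ
  have hξnorm : (0:ℝ) < ‖ξ‖ := hRpos.trans hξ
  have hξne : ξ ≠ 0 := norm_pos_iff.1 hξnorm
  set t : ℚ_[p] := x₀ / ξ with htdef
  have hξt : ξ * t = x₀ := by rw [htdef]; field_simp
  have htnorm : ‖t‖ ≤ δ := by
    rw [htdef, norm_div]
    rw [div_le_iff₀ hξnorm]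
    calc ‖x₀‖ ≤ p := hx₀
      _ = δ * (p / δ) := by field_simp
      _ ≤ δ * R := mul_le_mul_of_nonneg_left (le_max_left _ _) hδ.le
      _ ≤ δ * ‖ξ‖ := mul_le_mul_of_nonneg_left hξ.le hδ.le
  have key : FT μ χ f ξ * (starRingEnd ℂ) (χ x₀ : ℂ) = FT μ χ f ξ := by
    have := integral_add_right_eq_self
      (μ := μ) (fun x => f x * (starRingEnd ℂ) (χ (ξ * x) : ℂ)) t
    calc FT μ χ f ξ * (starRingEnd ℂ) (χ x₀ : ℂ)
        = ∫ x, f x * (starRingEnd ℂ) (χ (ξ * x) : ℂ) * (starRingEnd ℂ) (χ x₀ : ℂ) ∂μ := by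
          rw [FT, ← integral_mul_const]
      _ = ∫ x, f (x + t) * (starRingEnd ℂ) (χ (ξ * (x + t)) : ℂ) ∂μ := by
          congr 1; funext x
          rw [hf x t htnorm]
          have : ξ * (x + t) = ξ * x + x₀ := by rw [mul_add, hξt]
          rw [this, AddChar.map_add_eq_mul, Circle.coe_mul, map_mul (starRingEnd ℂ)]
          ring
      _ = FT μ χ f ξ := this
  have hne : (starRingEnd ℂ) (χ x₀ : ℂ) - 1 ≠ 0 := by
    intro h
    apply hx₀ne
    have h1 : (starRingEnd ℂ) (χ x₀ : ℂ) = 1 := by linear_combination h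
    have h2 : (χ x₀ : ℂ) = 1 := by
      have := congrArg (starRingEnd ℂ) h1
      simpa using this
    exact_mod_cast Circle.coe_injective (by simpa using h2)
  have : FT μ χ f ξ * ((starRingEnd ℂ) (χ x₀ : ℂ) - 1) = 0 := by
    rw [mul_sub, key, mul_one, sub_self]
  exact (mul_eq_zero.1 this).resolve_right hne

/-- **Fourier transform of test functions.** If `f : ℚ_p → ℂ` is locally constant with
compact support, then `Ff` is also locally constant with compact support. -/
theorem fourier_locallyConstant {p : ℕ} [Fact p.Prime] (μ : Measure ℚ_[p])
    [μ.IsAddHaarMeasure] (hμ : μ {x : ℚ_[p] | ‖x‖ ≤ 1} = 1)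
    (χ : AddChar ℚ_[p] Circle) (hχc : Continuous χ)
    (hχ1 : ∀ x : ℚ_[p], ‖x‖ ≤ 1 → χ x = 1)
    (hχ2 : ∃ x : ℚ_[p], ‖x‖ ≤ p ∧ χ x ≠ 1)
    (f : ℚ_[p] → ℂ) (hlc : IsLocallyConstant f) (hcs : HasCompactSupport f) :
    IsLocallyConstant (FT μ χ f) ∧ HasCompactSupport (FT μ χ f) := by
  exact ⟨FT_isLocallyConstant_aux μ χ hχ1 f hcs,
    FT_hasCompactSupport_aux μ χ hχ2 f (uniform_locallyConstant_aux f hlc hcs)⟩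
end

section
/- If f : ℚ_p → ℂ is locally constant and has compact support, then Fourier inversion holds pointwise: F⁻¹(Ff)(x) = f(x) for every x ∈ ℚ_p. -/
/- Setting: `ℚ_[p]` the `p`-adic numbers with `‖p‖ = p⁻¹`, `μ` an additive Haar measure
normalized so that `μ(ℤ_p) = 1`, and `χ : ℚ_[p] → Circle` a continuous additive character
trivial on `ℤ_p` but nontrivial on `p⁻¹ℤ_p`. -/

open MeasureTheory ENNReal

open Set

namespace PadicFourierAux

variable {p : ℕ} [Fact p.Prime]

/-- The closed ball of radius `p^k` in `ℚ_[p]`. -/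
def Bk (p : ℕ) [Fact p.Prime] (k : ℤ) : Set ℚ_[p] := {x : ℚ_[p] | ‖x‖ ≤ (p : ℝ) ^ k}

lemma one_lt_p : (1 : ℝ) < p := by exact_mod_cast (Fact.out : p.Prime).one_lt

lemma p_pos : (0 : ℝ) < p := lt_trans one_pos one_lt_p

lemma mem_Bk {k : ℤ} {x : ℚ_[p]} : x ∈ Bk p k ↔ ‖x‖ ≤ (p : ℝ) ^ k := Iff.rfl

lemma isClosed_Bk (k : ℤ) : IsClosed (Bk p k) :=
  isClosed_le continuous_norm continuous_const

lemma measurableSet_Bk (k : ℤ) : MeasurableSet (Bk p k) := (isClosed_Bk k).measurableSet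

lemma Bk_eq_closedBall (k : ℤ) : Bk p k = Metric.closedBall (0 : ℚ_[p]) ((p:ℝ)^k) := by
  ext x; simp [Bk, Metric.mem_closedBall, dist_zero_right]

lemma isCompact_Bk (k : ℤ) : IsCompact (Bk p k) := by
  rw [Bk_eq_closedBall]; exact isCompact_closedBall _ _

lemma add_mem_Bk {k : ℤ} {x t : ℚ_[p]} (hx : x ∈ Bk p k) (ht : t ∈ Bk p k) :
    x + t ∈ Bk p k :=
  le_trans (Padic.nonarchimedean x t) (max_le hx ht)

lemma add_mem_Bk_iff {k : ℤ} {t : ℚ_[p]} (ht : t ∈ Bk p k) (x : ℚ_[p]) :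
    x + t ∈ Bk p k ↔ x ∈ Bk p k := by
  constructor
  · intro h
    have := add_mem_Bk h (by simpa [mem_Bk] using ht : -t ∈ Bk p k)
    simpa using this
  · exact fun h => add_mem_Bk h ht

variable (μ : Measure ℚ_[p]) [μ.IsAddHaarMeasure]

lemma measure_ball_one (hμ : μ {x : ℚ_[p] | ‖x‖ ≤ 1} = 1) :
    μ (Bk p 1) = p := by
  classical
  -- cosets a/p + ℤ_p, a < p
  set T : ℕ → Set ℚ_[p] := fun a => {x : ℚ_[p] | ‖x - (a : ℚ_[p]) / p‖ ≤ 1} with hT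
  have hp0 : (p : ℚ_[p]) ≠ 0 := Nat.cast_ne_zero.2 (Fact.out : p.Prime).ne_zero
  have hTmeas : ∀ a, MeasurableSet (T a) := fun a =>
    (isClosed_le (by continuity) continuous_const).measurableSet
  have hTmu : ∀ a, μ (T a) = 1 := by
    intro a
    have : T a = (fun x => -((a : ℚ_[p]) / p) + x) ⁻¹' {x : ℚ_[p] | ‖x‖ ≤ 1} := by
      ext x; simp [hT, neg_add_eq_sub]
    rw [this, measure_preimage_add, hμ]
  have hcover : Bk p 1 = ⋃ a ∈ Finset.range p, T a := by
    ext x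
    simp only [Finset.mem_range, mem_iUnion, exists_prop]
    constructor
    · intro hx
      have hpx : ‖(p : ℚ_[p]) * x‖ ≤ 1 := by
        rw [norm_mul, Padic.norm_p]
        rw [mem_Bk, zpow_one] at hx
        calc (p:ℝ)⁻¹ * ‖x‖ ≤ (p:ℝ)⁻¹ * p := by
              exact mul_le_mul_of_nonneg_left hx (by positivity)
          _ = 1 := inv_mul_cancel₀ (ne_of_gt p_pos)
      set z : ℤ_[p] := ⟨(p : ℚ_[p]) * x, hpx⟩ with hz
      refine ⟨z.appr 1, by simpa using z.appr_lt 1, ?_⟩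
      have hspec : ‖z - (z.appr 1 : ℤ_[p])‖ ≤ (p : ℝ) ^ (-(1:ℕ) : ℤ) :=
        (PadicInt.norm_le_pow_iff_mem_span_pow _ 1).2 (by simpa using z.appr_spec 1)
      have hq : ‖(p : ℚ_[p]) * x - (z.appr 1 : ℚ_[p])‖ ≤ (p:ℝ)⁻¹ := by
        have := hspec
        rw [← PadicInt.padic_norm_e_of_padicInt] at this
        push_cast at this
        simpa using this
      show ‖x - (z.appr 1 : ℚ_[p]) / p‖ ≤ 1
      have hxa : x - (z.appr 1 : ℚ_[p]) / p = ((p : ℚ_[p]) * x - (z.appr 1 : ℚ_[p])) / p := by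
        field_simp
      rw [hxa, norm_div, Padic.norm_p, div_le_one (inv_pos.2 p_pos)]
      exact hq
    · intro ⟨a, ha, hx⟩
      rw [mem_Bk, zpow_one]
      have h1 : ‖(a : ℚ_[p]) / p‖ ≤ p := by
        rw [norm_div, Padic.norm_p]
        have : ‖(a : ℚ_[p])‖ ≤ 1 := by
          exact_mod_cast Padic.norm_int_le_one (a : ℤ)
        calc ‖(a:ℚ_[p])‖ / (p:ℝ)⁻¹ = ‖(a:ℚ_[p])‖ * p := by field_simp
          _ ≤ 1 * p := by exact mul_le_mul_of_nonneg_right this (le_of_lt p_pos)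
          _ = p := one_mul _
      have : x = (x - (a : ℚ_[p]) / p) + (a : ℚ_[p]) / p := by ring
      rw [this]
      refine le_trans (Padic.nonarchimedean _ _) (max_le ?_ h1)
      exact le_trans hx (by exact_mod_cast le_of_lt one_lt_p)
  have hdisj : (↑(Finset.range p) : Set ℕ).PairwiseDisjoint T := by
    intro a ha b hb hab
    refine Set.disjoint_left.2 fun x hxa hxb => hab ?_
    simp only [Finset.coe_range, Set.mem_Iio] at ha hb
    have hxa' : ‖x - (a : ℚ_[p]) / p‖ ≤ 1 := hxa
    have hxb' : ‖x - (b : ℚ_[p]) / p‖ ≤ 1 := hxb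
    have h1 : ‖(a : ℚ_[p])/p - (b : ℚ_[p])/p‖ ≤ 1 := by
      have hsub : (a : ℚ_[p])/p - (b:ℚ_[p])/p = (x - (b:ℚ_[p])/p) + -(x - (a:ℚ_[p])/p) := by ring
      rw [hsub]
      refine le_trans (Padic.nonarchimedean _ _) (max_le hxb' ?_)
      rw [norm_neg]; exact hxa'
    have hd : (a:ℚ_[p])/p - (b:ℚ_[p])/p = ((((a:ℤ) - b : ℤ)) : ℚ_[p])/p := by push_cast; ring
    rw [hd, norm_div, Padic.norm_p, div_le_one (inv_pos.2 p_pos)] at h1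
    have h3 : ‖((((a:ℤ) - b : ℤ)) : ℚ_[p])‖ < 1 :=
      lt_of_le_of_lt h1 (by
        rw [inv_lt_one_iff₀]; right; exact one_lt_p)
    have hdvd : (p:ℤ) ∣ ((a:ℤ) - b) := Padic.norm_intCast_lt_one_iff.1 h3
    have habs : |(a:ℤ) - b| < p := by
      have ha' : (a:ℤ) < p := by exact_mod_cast ha
      have hb' : (b:ℤ) < p := by exact_mod_cast hb
      rcases abs_cases ((a:ℤ) - b) with ⟨h, _⟩ | ⟨h, _⟩ <;> omega
    have := Int.eq_zero_of_abs_lt_dvd hdvd habs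
    omega
  rw [hcover, measure_biUnion_finset hdisj (fun a _ => hTmeas a)]
  simp [hTmu]

lemma measure_Bk (hμ : μ {x : ℚ_[p] | ‖x‖ ≤ 1} = 1) (k : ℤ) :
    μ (Bk p k) = (p : ℝ≥0∞) ^ k := by
  have hp0 : (p : ℚ_[p]) ≠ 0 := Nat.cast_ne_zero.2 (Fact.out : p.Prime).ne_zero
  have hpe0 : (p : ℝ≥0∞) ≠ 0 := by exact_mod_cast (Fact.out : p.Prime).ne_zero
  have hpet : (p : ℝ≥0∞) ≠ ∞ := ENNReal.natCast_ne_top p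
  have h0 : μ (Bk p 0) = 1 := by
    have : Bk p 0 = {x : ℚ_[p] | ‖x‖ ≤ 1} := by ext x; simp [Bk]
    rw [this, hμ]
  -- the scaling automorphism x ↦ p * x
  let e : ℚ_[p] ≃+ ℚ_[p] :=
    { toFun := fun x => (p : ℚ_[p]) * x
      invFun := fun x => (p : ℚ_[p])⁻¹ * x
      left_inv := fun x => by field_simp
      right_inv := fun x => by field_simp
      map_add' := fun x y => mul_add _ _ _ }
  have hec : Continuous e := by
    show Continuous fun x : ℚ_[p] => (p : ℚ_[p]) * x
    exact continuous_mul_left _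
  have hec' : Continuous e.symm := by
    show Continuous fun x : ℚ_[p] => (p : ℚ_[p])⁻¹ * x
    exact continuous_mul_left _
  haveI : (μ.map e).IsAddHaarMeasure := e.isAddHaarMeasure_map μ hec hec'
  have huniq : μ.map e = ((μ.map e).addHaarScalarFactor μ : ℝ≥0∞) • μ := by
    exact Measure.isAddLeftInvariant_eq_smul (μ.map e) μ
  have hpre : ∀ k : ℤ, e ⁻¹' (Bk p k) = Bk p (k + 1) := by
    intro k
    ext y
    show ‖(p : ℚ_[p]) * y‖ ≤ (p:ℝ)^k ↔ ‖y‖ ≤ (p:ℝ)^(k+1)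
    rw [norm_mul, Padic.norm_p]
    rw [inv_mul_le_iff₀ p_pos]
    rw [zpow_add₀ (ne_of_gt p_pos), zpow_one, mul_comm]
  have hmapk : ∀ k : ℤ, (μ.map e) (Bk p k) = μ (Bk p (k + 1)) := by
    intro k
    rw [Measure.map_apply hec.measurable (measurableSet_Bk k), hpre]
  have hscal : ((μ.map e).addHaarScalarFactor μ : ℝ≥0∞) = p := by
    have h1 := hmapk 0
    rw [huniq] at h1
    simp only [Measure.smul_apply, smul_eq_mul] at h1
    rw [h0, mul_one] at h1
    rw [h1, zero_add, measure_ball_one μ hμ]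
  have hstep : ∀ k : ℤ, μ (Bk p (k + 1)) = p * μ (Bk p k) := by
    intro k
    rw [← hmapk k, huniq]
    simp only [Measure.smul_apply, smul_eq_mul]
    rw [hscal]
  induction k using Int.induction_on with
  | zero => rw [h0, zpow_zero]
  | succ k ih =>
      rw [hstep k, ih, ENNReal.zpow_add hpe0 hpet, zpow_one, mul_comm]
  | pred k ih =>
      have := hstep (-(k:ℤ) - 1)
      rw [sub_add_cancel, ih] at this
      have hinv : μ (Bk p (-(k:ℤ) - 1)) = (p : ℝ≥0∞)⁻¹ * (p:ℝ≥0∞) ^ (-(k:ℤ)) := by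
        rw [this]
        rw [← mul_assoc, ENNReal.inv_mul_cancel hpe0 hpet, one_mul]
      rw [hinv, sub_eq_add_neg, ENNReal.zpow_add hpe0 hpet, mul_comm]
      congr 1
      rw [ENNReal.zpow_neg, zpow_one]

lemma toReal_pzpow (k : ℤ) : ((p : ℝ≥0∞) ^ k).toReal = (p : ℝ) ^ k := by
  cases k with
  | ofNat n => simp [ENNReal.toReal_pow]
  | negSucc n =>
      simp [zpow_negSucc, ENNReal.toReal_pow, ENNReal.toReal_inv]

lemma coe_circle_ne_one {z : Circle} (h : z ≠ 1) : (z : ℂ) ≠ 1 := by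
  intro hc
  exact h (by ext; simpa using hc)

/-- The key character integral over the ball `Bk p k`. -/
lemma integral_char (hμ : μ {x : ℚ_[p] | ‖x‖ ≤ 1} = 1)
    (χ : AddChar ℚ_[p] Circle)
    (hχ1 : ∀ x : ℚ_[p], ‖x‖ ≤ 1 → χ x = 1)
    (hχ2 : ∃ x : ℚ_[p], ‖x‖ ≤ p ∧ χ x ≠ 1) (a : ℚ_[p]) (k : ℤ) :
    ∫ ξ, (Bk p k).indicator (fun ξ => (χ (a * ξ) : ℂ)) ξ ∂μ =
      if ‖a‖ ≤ (p : ℝ) ^ (-k) then ((p:ℝ)^k : ℂ) else 0 := by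
  by_cases h : ‖a‖ ≤ (p : ℝ) ^ (-k)
  · rw [if_pos h]
    have hval : ∀ ξ ∈ Bk p k, (χ (a * ξ) : ℂ) = 1 := by
      intro ξ hξ
      have : ‖a * ξ‖ ≤ 1 := by
        rw [norm_mul]
        calc ‖a‖ * ‖ξ‖ ≤ (p:ℝ)^(-k) * (p:ℝ)^k :=
              mul_le_mul h hξ (norm_nonneg _) (le_of_lt (zpow_pos p_pos _))
          _ = 1 := by rw [← zpow_add₀ (ne_of_gt p_pos)]; simp
      rw [hχ1 _ this]; simp
    rw [Set.indicator_congr (fun ξ hξ => hval ξ hξ)]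
    rw [integral_indicator_const (1 : ℂ) (measurableSet_Bk k)]
    rw [Measure.real, measure_Bk μ hμ, toReal_pzpow, Complex.real_smul, mul_one]
    norm_cast
  · rw [if_neg h]
    push_neg at h
    have ha0 : a ≠ 0 := by
      intro h0
      rw [h0, norm_zero] at h
      exact absurd h (not_lt.2 (le_of_lt (zpow_pos p_pos _)))
    -- ‖a‖ ≥ p^(1-k)
    have hage : (p:ℝ) ^ (1 - k) ≤ ‖a‖ := by
      rw [Padic.norm_eq_zpow_neg_valuation ha0] at h ⊢
      rw [zpow_lt_zpow_iff_right₀ one_lt_p] at h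
      exact zpow_le_zpow_right₀ (le_of_lt one_lt_p) (by omega)
    obtain ⟨x₀, hx₀p, hx₀⟩ := hχ2
    set t : ℚ_[p] := x₀ / a with hts
    have hat : a * t = x₀ := mul_div_cancel₀ _ ha0
    have ht : t ∈ Bk p k := by
      rw [mem_Bk, hts, norm_div, div_le_iff₀ (norm_pos_iff.2 ha0)]
      calc ‖x₀‖ ≤ (p:ℝ) := hx₀p
        _ = (p:ℝ)^k * (p:ℝ)^(1-k) := by
            rw [← zpow_add₀ (ne_of_gt p_pos)]; norm_num
        _ ≤ (p:ℝ)^k * ‖a‖ := by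
            exact mul_le_mul_of_nonneg_left hage (le_of_lt (zpow_pos p_pos _))
    set g : ℚ_[p] → ℂ := fun ξ => (Bk p k).indicator (fun ξ => (χ (a * ξ) : ℂ)) ξ with hg
    have hshift : ∫ ξ, g (ξ + t) ∂μ = ∫ ξ, g ξ ∂μ := integral_add_right_eq_self g t
    have hgt : ∀ ξ, g (ξ + t) = (χ (a * t) : ℂ) * g ξ := by
      intro ξ
      simp only [hg]
      by_cases hξ : ξ ∈ Bk p k
      · rw [Set.indicator_of_mem (add_mem_Bk hξ ht), Set.indicator_of_mem hξ]
        rw [mul_add, AddChar.map_add_eq_mul]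
        push_cast
        ring
      · rw [Set.indicator_of_notMem (fun hc => hξ ((add_mem_Bk_iff ht ξ).1 hc)),
          Set.indicator_of_notMem hξ, mul_zero]
    have h2 : ∫ ξ, g (ξ + t) ∂μ = (χ (a * t) : ℂ) * ∫ ξ, g ξ ∂μ := by
      simp_rw [hgt]
      exact MeasureTheory.integral_const_mul _ _
    have key : ∫ ξ, g ξ ∂μ = (χ (a * t) : ℂ) * ∫ ξ, g ξ ∂μ := by rw [← h2, hshift]
    have hc1 : (χ (a * t) : ℂ) ≠ 1 := by rw [hat]; exact coe_circle_ne_one hx₀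
    have hz : ((χ (a * t) : ℂ) - 1) * ∫ ξ, g ξ ∂μ = 0 := by
      rw [sub_mul, one_mul, ← key, sub_self]
    rcases mul_eq_zero.1 hz with h' | h'
    · exact absurd (sub_eq_zero.1 h') hc1
    · exact h'

end PadicFourierAux

open PadicFourierAux in
/-- **Pointwise Fourier inversion for test functions.** If `f : ℚ_p → ℂ` is locally constant
with compact support, then `F⁻¹(Ff)(x) = f(x)` for every `x ∈ ℚ_p`. -/
theorem fourier_inversion_locallyConstant {p : ℕ} [Fact p.Prime] (μ : Measure ℚ_[p])
    [μ.IsAddHaarMeasure] (hμ : μ {x : ℚ_[p] | ‖x‖ ≤ 1} = 1)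
    (χ : AddChar ℚ_[p] Circle) (hχc : Continuous χ)
    (hχ1 : ∀ x : ℚ_[p], ‖x‖ ≤ 1 → χ x = 1)
    (hχ2 : ∃ x : ℚ_[p], ‖x‖ ≤ p ∧ χ x ≠ 1)
    (f : ℚ_[p] → ℂ) (hlc : IsLocallyConstant f) (hcs : HasCompactSupport f) (x : ℚ_[p]) :
    IFT μ χ (FT μ χ f) x = f x := by
  classical
  obtain ⟨x₀, hx₀p, hx₀⟩ := hχ2
  have hfc : Continuous f := hlc.continuous
  have h1p : (1:ℝ) < p := one_lt_p
  have hpp : (0:ℝ) < p := p_pos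
  -- a bound on ‖f‖
  obtain ⟨C₀, hC₀⟩ := hcs.exists_bound_of_continuousOn hfc.continuousOn
  set C : ℝ := max C₀ 0 with hCdef
  have hC : ∀ y, ‖f y‖ ≤ C := by
    intro y
    by_cases hy : y ∈ tsupport f
    · exact le_trans (hC₀ y hy) (le_max_left _ _)
    · rw [image_eq_zero_of_notMem_tsupport hy, norm_zero]; exact le_max_right _ _
  have hCnn : (0:ℝ) ≤ C := le_max_right _ _
  -- m with tsupport f ⊆ Bk p m
  obtain ⟨r, hr⟩ := hcs.isBounded.subset_closedBall 0
  obtain ⟨mnat, hm⟩ := pow_unbounded_of_one_lt r h1p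
  set m : ℤ := (mnat : ℤ) with hmdef
  have hsupp : tsupport f ⊆ Bk p m := by
    intro y hy
    have := hr hy
    rw [Metric.mem_closedBall, dist_zero_right] at this
    rw [mem_Bk, hmdef, zpow_natCast]
    exact le_trans this (le_of_lt hm)
  -- local constancy radii
  have hconst : ∀ y : ℚ_[p], ∃ n : ℤ, ∀ z, ‖z - y‖ < (p:ℝ)^n → f z = f y := by
    intro y
    obtain ⟨U, hU, hyU, hUc⟩ := hlc.exists_open y
    obtain ⟨ε, hε, hball⟩ := Metric.isOpen_iff.1 hU y hyU
    obtain ⟨nn, hnn⟩ := exists_pow_lt_of_lt_one hε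
      (by rw [inv_lt_one_iff₀]; right; exact h1p : (p:ℝ)⁻¹ < 1)
    refine ⟨-(nn:ℤ), fun z hz => hUc z (hball ?_)⟩
    rw [Metric.mem_ball, dist_eq_norm]
    calc ‖z - y‖ < (p:ℝ)^(-(nn:ℤ)) := hz
      _ = ((p:ℝ)⁻¹)^nn := by rw [zpow_neg, zpow_natCast, inv_pow]
      _ < ε := hnn
  choose n hn using hconst
  -- finite subcover of the big ball
  obtain ⟨t, ht_sub, ht_cov⟩ := (isCompact_Bk (p := p) m).elim_nhds_subcover
    (fun y => {z : ℚ_[p] | ‖z - y‖ < (p:ℝ)^(n y)})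
    (by
      intro y _
      show {z : ℚ_[p] | ‖z - y‖ < (p:ℝ)^(n y)} ∈ nhds y
      have : {z : ℚ_[p] | ‖z - y‖ < (p:ℝ)^(n y)} = Metric.ball y ((p:ℝ)^(n y)) := by
        ext z; simp [Metric.mem_ball, dist_eq_norm]
      rw [this]
      exact Metric.ball_mem_nhds y (zpow_pos hpp _))
  set N : ℤ := m - (t.sup fun y => (m - n y).toNat) - 1 with hNdef
  have hNm : N ≤ m := by
    have h0 : (0:ℤ) ≤ ((t.sup fun y => (m - n y).toNat : ℕ) : ℤ) := Int.natCast_nonneg _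
    omega
  have hNlt : ∀ y ∈ t, N < n y := by
    intro y hy
    have h1 : (m - n y).toNat ≤ t.sup fun y => (m - n y).toNat :=
      Finset.le_sup (f := fun y => (m - n y).toNat) hy
    have h2 : m - n y ≤ ((m - n y).toNat : ℤ) := Int.self_le_toNat _
    have h3 : ((m - n y).toNat : ℤ) ≤ ((t.sup fun y => (m - n y).toNat : ℕ) : ℤ) := by
      exact_mod_cast h1
    omega
  -- the uniform local constancy property
  have hN : ∀ y z : ℚ_[p], ‖y - z‖ ≤ (p:ℝ)^N → f y = f z := by
    intro y z hyz
    by_cases hy : y ∈ Bk p m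
    · obtain ⟨y₀, hy₀t, hyy₀⟩ : ∃ y₀ ∈ t, ‖y - y₀‖ < (p:ℝ)^(n y₀) := by
        have := ht_cov hy
        simpa using this
      have hNn : (p:ℝ)^N < (p:ℝ)^(n y₀) := zpow_lt_zpow_right₀ h1p (hNlt y₀ hy₀t)
      have hz : ‖z - y₀‖ < (p:ℝ)^(n y₀) := by
        have hdec : z - y₀ = (z - y) + (y - y₀) := by ring
        rw [hdec]
        refine lt_of_le_of_lt (Padic.nonarchimedean _ _) (max_lt ?_ hyy₀)
        rw [norm_sub_rev]
        exact lt_of_le_of_lt hyz hNn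
      rw [hn y₀ y hyy₀, hn y₀ z hz]
    · have hzm : z ∉ Bk p m := by
        intro hzk
        apply hy
        rw [mem_Bk]
        have hdec : y = (y - z) + z := by ring
        rw [hdec]
        refine le_trans (Padic.nonarchimedean _ _) (max_le ?_ hzk)
        exact le_trans hyz (zpow_le_zpow_right₀ (le_of_lt h1p) hNm)
      rw [image_eq_zero_of_notMem_tsupport (fun hc => hy (hsupp hc)),
        image_eq_zero_of_notMem_tsupport (fun hc => hzm (hsupp hc))]
  set A : Set ℚ_[p] := Bk p (-N) with hAdef
  have hAmeas : MeasurableSet A := measurableSet_Bk (-N)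
  have hAcomp : IsCompact A := isCompact_Bk (-N)
  -- vanishing of FT outside A
  have hvan : ∀ ξ : ℚ_[p], ξ ∉ A → FT μ χ f ξ = 0 := by
    intro ξ hξmem
    have hξ : (p:ℝ)^(-N) < ‖ξ‖ := not_le.1 hξmem
    have hξ0 : ξ ≠ 0 := by
      intro h0
      rw [h0, norm_zero] at hξ
      exact absurd hξ (not_lt.2 (le_of_lt (zpow_pos hpp _)))
    have hge : (p:ℝ)^(-N + 1) ≤ ‖ξ‖ := by
      rw [Padic.norm_eq_zpow_neg_valuation hξ0] at hξ ⊢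
      rw [zpow_lt_zpow_iff_right₀ h1p] at hξ
      exact zpow_le_zpow_right₀ (le_of_lt h1p) (by omega)
    set tt : ℚ_[p] := x₀ / ξ with httdef
    have hat : ξ * tt = x₀ := mul_div_cancel₀ _ hξ0
    have htt : ‖tt‖ ≤ (p:ℝ)^N := by
      rw [httdef, norm_div, div_le_iff₀ (norm_pos_iff.2 hξ0)]
      calc ‖x₀‖ ≤ (p:ℝ) := hx₀p
        _ = (p:ℝ)^N * (p:ℝ)^(-N + 1) := by
            rw [← zpow_add₀ (ne_of_gt hpp)]; norm_num
        _ ≤ (p:ℝ)^N * ‖ξ‖ := mul_le_mul_of_nonneg_left hge (le_of_lt (zpow_pos hpp _))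
    have hshift := integral_add_right_eq_self (μ := μ)
      (fun y => f y * (starRingEnd ℂ) (χ (ξ * y) : ℂ)) tt
    have hpt : ∀ y : ℚ_[p], f (y + tt) * (starRingEnd ℂ) (χ (ξ * (y + tt)) : ℂ)
        = (starRingEnd ℂ) ((χ x₀ : ℂ)) * (f y * (starRingEnd ℂ) (χ (ξ * y) : ℂ)) := by
      intro y
      have hfy : f (y + tt) = f y := by
        refine hN _ _ ?_
        have : y + tt - y = tt := by ring
        rw [this]; exact htt
      have harg : ξ * (y + tt) = ξ * y + x₀ := by rw [mul_add, hat]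
      rw [hfy, harg, AddChar.map_add_eq_mul]
      push_cast
      rw [map_mul]
      ring
    simp only [hpt] at hshift
    rw [MeasureTheory.integral_const_mul] at hshift
    have hne : (starRingEnd ℂ) ((χ x₀ : ℂ)) ≠ 1 := by
      intro hc
      apply coe_circle_ne_one hx₀
      have := congrArg (starRingEnd ℂ) hc
      simpa using this
    have hz : ((starRingEnd ℂ) ((χ x₀ : ℂ)) - 1) * FT μ χ f ξ = 0 := by
      rw [sub_mul, one_mul, FT, hshift, sub_self]
    rcases mul_eq_zero.1 hz with h' | h'
    · exact absurd (sub_eq_zero.1 h') hne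
    · exact h'
  -- the product function
  set Φ : ℚ_[p] × ℚ_[p] → ℂ := fun z =>
    A.indicator (fun ξ => (χ (x * ξ) : ℂ)) z.1
      * (f z.2 * (starRingEnd ℂ) (χ (z.1 * z.2) : ℂ)) with hΦdef
  have hstep1 : IFT μ χ (FT μ χ f) x = ∫ ξ, ∫ y, Φ (ξ, y) ∂μ ∂μ := by
    rw [IFT]
    congr 1
    funext ξ
    by_cases hξ : ξ ∈ A
    · simp only [hΦdef, Set.indicator_of_mem hξ]
      rw [MeasureTheory.integral_const_mul]
      rw [FT]
      ring
    · simp only [hΦdef, Set.indicator_of_notMem hξ, zero_mul, integral_zero]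
      rw [hvan ξ hξ, zero_mul]
  -- measurability
  have hcont1 : Continuous fun ξ : ℚ_[p] => (χ (x * ξ) : ℂ) :=
    continuous_subtype_val.comp (hχc.comp (continuous_const.mul continuous_id))
  have hsm1 : StronglyMeasurable (A.indicator fun ξ : ℚ_[p] => (χ (x * ξ) : ℂ)) :=
    hcont1.stronglyMeasurable.indicator hAmeas
  have hcont2 : Continuous fun z : ℚ_[p] × ℚ_[p] =>
      f z.2 * (starRingEnd ℂ) (χ (z.1 * z.2) : ℂ) :=
    (hfc.comp continuous_snd).mul (Complex.continuous_conj.comp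
      (continuous_subtype_val.comp (hχc.comp (continuous_fst.mul continuous_snd))))
  have hΦm : AEStronglyMeasurable Φ (μ.prod μ) :=
    ((hsm1.comp_measurable measurable_fst).mul hcont2.stronglyMeasurable).aestronglyMeasurable
  -- integrable bound
  set gbd : ℚ_[p] × ℚ_[p] → ℝ := (A ×ˢ tsupport f).indicator (fun _ => C) with hgbddef
  have hgint : Integrable gbd (μ.prod μ) := by
    rw [hgbddef, integrable_indicator_iff (hAmeas.prod (isClosed_tsupport f).measurableSet)]
    refine integrableOn_const ?_
    rw [Measure.prod_prod]
    exact (ENNReal.mul_lt_top hAcomp.measure_lt_top hcs.measure_lt_top).ne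
  have hgnn : ∀ z, (0:ℝ) ≤ gbd z := fun z => Set.indicator_nonneg (fun _ _ => hCnn) z
  have hbd : ∀ z, ‖Φ z‖ ≤ gbd z := by
    intro z
    by_cases h1 : z.1 ∈ A
    · by_cases h2 : z.2 ∈ tsupport f
      · rw [hgbddef, Set.indicator_of_mem (Set.mk_mem_prod h1 h2)]
        simp only [hΦdef, Set.indicator_of_mem h1]
        rw [norm_mul, norm_mul]
        have e1 : ‖(χ (x * z.1) : ℂ)‖ = 1 := by
          rw [Circle.norm_coe]
        have e2 : ‖(starRingEnd ℂ) (χ (z.1 * z.2) : ℂ)‖ = 1 := by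
          rw [RCLike.norm_conj, Circle.norm_coe]
        rw [e1, e2, one_mul, mul_one]
        exact hC _
      · have hfz : f z.2 = 0 := image_eq_zero_of_notMem_tsupport h2
        simp only [hΦdef, hfz, zero_mul, mul_zero, norm_zero]
        exact hgnn z
    · simp only [hΦdef, Set.indicator_of_notMem h1, zero_mul, norm_zero]
      exact hgnn z
  have hΦint : Integrable Φ (μ.prod μ) := hgint.mono' hΦm (ae_of_all _ hbd)
  have hswap : ∫ ξ, ∫ y, Φ (ξ, y) ∂μ ∂μ = ∫ y, ∫ ξ, Φ (ξ, y) ∂μ ∂μ :=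
    MeasureTheory.integral_integral_swap hΦint
  -- inner integral evaluation
  have hinner : ∀ y : ℚ_[p], ∫ ξ, Φ (ξ, y) ∂μ
      = f y * (if ‖x - y‖ ≤ (p:ℝ)^N then (((p:ℝ)^(-N) : ℝ) : ℂ) else 0) := by
    intro y
    have hpt2 : ∀ ξ, Φ (ξ, y) = f y * A.indicator (fun ξ => (χ ((x - y) * ξ) : ℂ)) ξ := by
      intro ξ
      by_cases hξ : ξ ∈ A
      · simp only [hΦdef, Set.indicator_of_mem hξ]
        have hconj : (starRingEnd ℂ) (χ (ξ * y) : ℂ) = ((χ (ξ * y))⁻¹ : Circle) :=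
          (Circle.coe_inv_eq_conj _).symm
        rw [hconj, ← AddChar.map_neg_eq_inv]
        have harg : (x - y) * ξ = x * ξ + -(ξ * y) := by ring
        rw [harg, AddChar.map_add_eq_mul]
        push_cast
        ring
      · simp [hΦdef, Set.indicator_of_notMem hξ]
    simp only [hpt2]
    rw [MeasureTheory.integral_const_mul]
    rw [hAdef, integral_char μ hμ χ hχ1 ⟨x₀, hx₀p, hx₀⟩ (x - y) (-N), neg_neg]
    norm_cast
  simp only [hstep1, hswap, hinner]
  -- final evaluation
  set D : Set ℚ_[p] := {y : ℚ_[p] | ‖x - y‖ ≤ (p:ℝ)^N} with hDdef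
  have hDmeas : MeasurableSet D :=
    (isClosed_le ((continuous_const.sub continuous_id).norm) continuous_const).measurableSet
  have hDmu : μ D = (p:ℝ≥0∞)^N := by
    have : D = (fun y => -x + y) ⁻¹' (Bk p N) := by
      ext y
      show ‖x - y‖ ≤ (p:ℝ)^N ↔ ‖-x + y‖ ≤ (p:ℝ)^N
      rw [show -x + y = -(x - y) by ring, norm_neg]
    rw [this, measure_preimage_add, measure_Bk μ hμ]
  have hfinal : (fun y => f y * (if ‖x - y‖ ≤ (p:ℝ)^N then (((p:ℝ)^(-N) : ℝ) : ℂ) else 0))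
      = fun y => (((p:ℝ)^(-N) : ℝ) : ℂ) * (D.indicator (fun _ => f x) y) := by
    funext y
    by_cases hy : ‖x - y‖ ≤ (p:ℝ)^N
    · rw [if_pos hy, Set.indicator_of_mem (by exact hy)]
      rw [← hN x y hy]
      ring
    · rw [if_neg hy, Set.indicator_of_notMem (by exact hy)]
      ring
  rw [hfinal, MeasureTheory.integral_const_mul,
    integral_indicator_const (f x) hDmeas, Measure.real, hDmu, toReal_pzpow,
    Complex.real_smul, ← mul_assoc]
  norm_cast
  rw [← zpow_add₀ (ne_of_gt hpp)]
  simp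
end
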